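/- arXiv:2410.22258 — 12 statements merged into one kernel-verified Lean document; each statement's English description precedes it below -/
import Mathlib

section
/- Let σ : ℝ → ℝ be slope-restricted on [0,1]. Let W ∈ ℝ^{c×c₋}, b ∈ ℝ^c, let X₋ ∈ ℝ^{c₋×c₋} and X ∈ ℝ^{c×c} be symmetric positive definite, and let Λ ∈ ℝ^{c×c} be diagonal with positive diagonal entries. If the block matrix [[X₋, −Wᵀ Λ], [−Λ W, 2Λ − X]] is positive semidefinite, then the layer u ↦ σ(W u + b) satisfies (σ(W u^a + b) − σ(W u^b + b))ᵀ X (σ(W u^a + b) − σ(W u^b + b)) ≤ (u^a − u^b)ᵀ X₋ (u^a − u^b) for all u^a, u^b ∈ ℝ^{c₋}. -/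
open Matrix

/-!
Put `u = ua - ub`, `z = W u` (the difference of the pre-activations) and `y` the difference of the
activations. Slope restriction makes every `yᵢ (zᵢ - yᵢ)` nonnegative, so `yᵀ Λ (z - y) ≥ 0`.
Evaluating the LMI at `(u, y)` gives
`0 ≤ uᵀ X₋ u - yᵀ X y - 2 yᵀ Λ (W u - y)`, and the last term can only help.
-/

def SlopeRestricted (σ : ℝ → ℝ) : Prop :=
  ∀ a b : ℝ, 0 ≤ (σ a - σ b) * ((a - b) - (σ a - σ b))

theorem SlopeRestricted.dotProduct_diagonal_mulVec_nonneg {n : Type*} [Fintype n] [DecidableEq n]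
    {σ : ℝ → ℝ} (hσ : SlopeRestricted σ) {d : n → ℝ} (hd : ∀ i, 0 ≤ d i) (za zb : n → ℝ) :
    0 ≤ ((fun i => σ (za i)) - fun i => σ (zb i)) ⬝ᵥ
      diagonal d *ᵥ ((za - zb) - ((fun i => σ (za i)) - fun i => σ (zb i))) := by
  simp only [dotProduct, mulVec_diagonal]
  refine Finset.sum_nonneg fun i _ => ?_
  simpa [mul_left_comm] using mul_nonneg (hd i) (hσ (za i) (zb i))

section QuadraticForm

variable {R m n : Type*} [CommRing R] [Fintype m] [Fintype n]

theorem dotProduct_transpose_mulVec_mulVec_comm (W : Matrix n m R) {D : Matrix n n R}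
    (hD : Dᵀ = D) (u : m → R) (y : n → R) :
    u ⬝ᵥ Wᵀ *ᵥ D *ᵥ y = y ⬝ᵥ D *ᵥ W *ᵥ u := by
  rw [dotProduct_mulVec, vecMul_transpose, dotProduct_mulVec, ← mulVec_transpose, hD,
    dotProduct_comm]

theorem sumElim_dotProduct_fromBlocks_mulVec_sumElim (A : Matrix m m R) (W : Matrix n m R)
    {D : Matrix n n R} (hD : Dᵀ = D) (X : Matrix n n R) (u : m → R) (y : n → R) :
    Sum.elim u y ⬝ᵥ fromBlocks A (-(Wᵀ * D)) (-(D * W)) ((2 : R) • D - X) *ᵥ Sum.elim u y =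
      u ⬝ᵥ A *ᵥ u - y ⬝ᵥ X *ᵥ y - 2 * (y ⬝ᵥ D *ᵥ (W *ᵥ u - y)) := by
  simp only [fromBlocks_mulVec, sumElim_dotProduct_sumElim, Sum.elim_comp_inl, Sum.elim_comp_inr,
    neg_mulVec, sub_mulVec, smul_mulVec, dotProduct_add, dotProduct_neg, dotProduct_sub,
    dotProduct_smul, smul_eq_mul, ← mulVec_mulVec, mulVec_sub,
    dotProduct_transpose_mulVec_mulVec_comm W hD]
  ring

end QuadraticForm

theorem fc_layer_LMI_implies_incremental_dissipativity_general
    (cm c : ℕ) (σ : ℝ → ℝ)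
    (hσ : ∀ a b : ℝ, 0 ≤ (σ a - σ b) * ((a - b) - (σ a - σ b)))
    (W : Matrix (Fin c) (Fin cm) ℝ) (b : Fin c → ℝ)
    (Xm : Matrix (Fin cm) (Fin cm) ℝ)
    (X : Matrix (Fin c) (Fin c) ℝ)
    (d : Fin c → ℝ) (hd : ∀ i, 0 < d i)
    (hLMI : (Matrix.fromBlocks Xm (-(Wᵀ * Matrix.diagonal d))
      (-(Matrix.diagonal d * W)) ((2 : ℝ) • Matrix.diagonal d - X)).PosSemidef)
    (ua ub : Fin cm → ℝ) :
    ((fun i => σ ((W *ᵥ ua + b) i)) - fun i => σ ((W *ᵥ ub + b) i)) ⬝ᵥ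
        X *ᵥ ((fun i => σ ((W *ᵥ ua + b) i)) - fun i => σ ((W *ᵥ ub + b) i)) ≤
      (ua - ub) ⬝ᵥ Xm *ᵥ (ua - ub) := by
  set za := W *ᵥ ua + b
  set zb := W *ᵥ ub + b
  set y := (fun i => σ (za i)) - fun i => σ (zb i)
  have hz : W *ᵥ (ua - ub) = za - zb := by simp [za, zb, mulVec_sub]
  have hsector : 0 ≤ y ⬝ᵥ diagonal d *ᵥ ((za - zb) - y) :=
    SlopeRestricted.dotProduct_diagonal_mulVec_nonneg hσ (fun i => (hd i).le) za zb
  have hform := hLMI.dotProduct_mulVec_nonneg (Sum.elim (ua - ub) y)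
  rw [star_trivial, sumElim_dotProduct_fromBlocks_mulVec_sumElim _ _ (diagonal_transpose d),
    hz] at hform
  linarith

/-- The LMI `[[X₋, −Wᵀ Λ], [−Λ W, 2Λ − X]] ⪰ 0` certifies incremental
dissipativity of the fully-connected layer `u ↦ σ(W u + b)` with supply given by
the input weight `X₋` and output weight `X`. -/
theorem fc_layer_LMI_implies_incremental_dissipativity
    (cm c : ℕ) (σ : ℝ → ℝ)
    (hσ : ∀ a b : ℝ, 0 ≤ (σ a - σ b) * ((a - b) - (σ a - σ b)))
    (W : Matrix (Fin c) (Fin cm) ℝ) (b : Fin c → ℝ)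
    (Xm : Matrix (Fin cm) (Fin cm) ℝ) (hXm : Xm.PosDef)
    (X : Matrix (Fin c) (Fin c) ℝ) (hX : X.PosDef)
    (d : Fin c → ℝ) (hd : ∀ i, 0 < d i)
    (hLMI : (Matrix.fromBlocks Xm (-(Wᵀ * Matrix.diagonal d))
      (-(Matrix.diagonal d * W)) ((2 : ℝ) • Matrix.diagonal d - X)).PosSemidef)
    (ua ub : Fin cm → ℝ) :
    ((fun i => σ ((W *ᵥ ua + b) i)) - fun i => σ ((W *ᵥ ub + b) i)) ⬝ᵥ
        X *ᵥ ((fun i => σ ((W *ᵥ ua + b) i)) - fun i => σ ((W *ᵥ ub + b) i)) ≤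
      (ua - ub) ⬝ᵥ Xm *ᵥ (ua - ub) :=
  fc_layer_LMI_implies_incremental_dissipativity_general cm c σ hσ W b Xm X d hd hLMI ua ub
end

section
/- For all Y ∈ ℝ^{n×n} and Z ∈ ℝ^{m×n}, the Cayley transform defined by M = Y − Yᵀ + Zᵀ Z, U = (I + M)⁻¹ (I − M) ∈ ℝ^{n×n} and V = 2 Z (I + M)⁻¹ ∈ ℝ^{m×n} yields matrices satisfying Uᵀ U + Vᵀ V = I. -/
open Matrix

/-- The Cayley transform `U = (I+M)⁻¹(I−M)`, `V = 2Z(I+M)⁻¹` with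
`M = Y − Yᵀ + Zᵀ Z` satisfies `Uᵀ U + Vᵀ V = I`. -/
theorem cayley_transform_stiefel
    (n m : ℕ) (Y : Matrix (Fin n) (Fin n) ℝ) (Z : Matrix (Fin m) (Fin n) ℝ)
    (M : Matrix (Fin n) (Fin n) ℝ) (hM : M = Y - Yᵀ + Zᵀ * Z)
    (U : Matrix (Fin n) (Fin n) ℝ) (hU : U = (1 + M)⁻¹ * (1 - M))
    (V : Matrix (Fin m) (Fin n) ℝ) (hV : V = (2 : ℝ) • (Z * (1 + M)⁻¹)) :
    Uᵀ * U + Vᵀ * V = 1 := by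
  set N := 1 + M with hN
  set A := 1 - M with hA
  -- invertibility of N = 1 + M
  have hdet : IsUnit N.det := by
    rw [isUnit_iff_ne_zero]
    intro hd
    obtain ⟨v, hv, hv0⟩ := Matrix.exists_mulVec_eq_zero_iff.mpr hd
    apply hv
    have key : v ⬝ᵥ N.mulVec v = v ⬝ᵥ v + (Z.mulVec v) ⬝ᵥ (Z.mulVec v) := by
      rw [hN, hM]
      simp only [add_mulVec, sub_mulVec, one_mulVec, dotProduct_add, dotProduct_sub,
        ← Matrix.mulVec_mulVec, dotProduct_mulVec _ Zᵀ, vecMul_transpose,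
        dotProduct_mulVec _ Yᵀ, dotProduct_comm (Y.mulVec v) v]
      ring
    rw [hv0, dotProduct_zero] at key
    have h1 : 0 ≤ (Z.mulVec v) ⬝ᵥ (Z.mulVec v) :=
      Finset.sum_nonneg fun i _ => mul_self_nonneg _
    have h2 : 0 ≤ v ⬝ᵥ v := Finset.sum_nonneg fun i _ => mul_self_nonneg _
    have : v ⬝ᵥ v = 0 := by linarith
    exact dotProduct_self_eq_zero.mp this
  have hNi : N * N⁻¹ = 1 := mul_nonsing_inv N hdet
  have hiN : N⁻¹ * N = 1 := nonsing_inv_mul N hdet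
  -- M + Mᵀ = 2 Zᵀ Z
  have hMt : Mᵀ = (Zᵀ * Z + Zᵀ * Z) - M := by
    rw [hM]
    simp [transpose_add, transpose_sub, transpose_mul]
    abel
  -- key identity Aᵀ A + 4 Zᵀ Z = Nᵀ N
  have hkey : Aᵀ * A + ((Zᵀ*Z + Zᵀ*Z) + (Zᵀ*Z + Zᵀ*Z)) = Nᵀ * N := by
    rw [hA, hN, transpose_sub, transpose_add, transpose_one, hMt]
    noncomm_ring
  -- commutation A N = N A hence A N⁻¹ = N⁻¹ A
  have hAN : A * N = N * A := by rw [hA, hN]; noncomm_ring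
  have hANi : N⁻¹ * A = A * N⁻¹ := by
    calc N⁻¹ * A = N⁻¹ * A * (N * N⁻¹) := by rw [hNi, mul_one]
    _ = N⁻¹ * (A * N) * N⁻¹ := by noncomm_ring
    _ = N⁻¹ * (N * A) * N⁻¹ := by rw [hAN]
    _ = (N⁻¹ * N) * (A * N⁻¹) := by noncomm_ring
    _ = A * N⁻¹ := by rw [hiN, one_mul]
  have hANt : Aᵀ * (N⁻¹)ᵀ = (N⁻¹)ᵀ * Aᵀ := by
    rw [← transpose_mul, ← transpose_mul, hANi]
  have hiT : (N⁻¹)ᵀ = (Nᵀ)⁻¹ := transpose_nonsing_inv N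
  have hNiT : (Nᵀ)⁻¹ * Nᵀ = 1 := by
    rw [← hiT, ← transpose_mul, hNi, transpose_one]
  -- compute
  rw [hU, hV]
  rw [transpose_mul, transpose_smul, transpose_mul]
  rw [Matrix.smul_mul, Matrix.mul_smul, smul_smul]
  have hUU : (Aᵀ * (N⁻¹)ᵀ) * (N⁻¹ * A) = (Nᵀ)⁻¹ * (Aᵀ * A) * N⁻¹ := by
    rw [hANt, hANi, hiT]
    noncomm_ring
  have hVV : ((N⁻¹)ᵀ * Zᵀ) * (Z * N⁻¹) = (Nᵀ)⁻¹ * (Zᵀ * Z) * N⁻¹ := by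
    rw [hiT]; simp [Matrix.mul_assoc]
  rw [hUU, hVV]
  have h4 : ((2:ℝ) * 2) • ((Nᵀ)⁻¹ * (Zᵀ * Z) * N⁻¹)
      = (Nᵀ)⁻¹ * (((Zᵀ*Z + Zᵀ*Z) + (Zᵀ*Z + Zᵀ*Z))) * N⁻¹ := by
    rw [show ((2:ℝ)*2) = 2 + 2 by norm_num, add_smul, two_smul]
    simp [Matrix.mul_add, Matrix.add_mul]
  rw [h4, ← Matrix.add_mul, ← Matrix.mul_add, hkey]
  calc (Nᵀ)⁻¹ * (Nᵀ * N) * N⁻¹ = (Nᵀ)⁻¹ * Nᵀ * (N * N⁻¹) := by noncomm_ring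
  _ = 1 := by rw [hNi, hNiT, mul_one]
end

section
/- Let Y ∈ ℝ^{c×c}, Z ∈ ℝ^{c₋×c}, and γ ∈ ℝ^c with all entries nonzero, and let L₋ ∈ ℝ^{c₋×c₋} be invertible. Let (U, V) be the Cayley transform of (Y, Z), set Γ = diag(γ), W = √2 · Γ⁻¹ Vᵀ L₋, L = √2 · U Γ, Λ = Γ², X = Lᵀ L, and X₋ = L₋ᵀ L₋. Then the block matrix [[X₋, −Wᵀ Λ], [−Λ W, 2Λ − X]] is positive semidefinite. -/
/-! The Cayley transform satisfies `Uᵀ U + Vᵀ V = 1`: the matrix `1 + M` is invertible because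
its quadratic form `‖v‖² + ‖Z v‖²` is positive definite, it commutes with `1 - M`, and
`(1 + M)ᵀ (1 + M) - (1 - M)ᵀ (1 - M) = 2 (M + Mᵀ) = 4 Zᵀ Z`. Given this identity, the LMI matrix
factors as `Bᵀ B` with `B = [L₋, -√2 V Γ]`, hence is positive semidefinite. -/

open Matrix

namespace Matrix

variable {m n : Type*} [Fintype m] [Fintype n]

lemma dotProduct_mulVec_sub_transpose_add_gram (Y : Matrix n n ℝ) (Z : Matrix m n ℝ)
    (v : n → ℝ) : v ⬝ᵥ (Y - Yᵀ + Zᵀ * Z) *ᵥ v = Z *ᵥ v ⬝ᵥ Z *ᵥ v := by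
  have hskew : v ⬝ᵥ Yᵀ *ᵥ v = v ⬝ᵥ Y *ᵥ v := by
    rw [dotProduct_mulVec, vecMul_transpose, dotProduct_comm]
  rw [add_mulVec, sub_mulVec, dotProduct_add, dotProduct_sub, hskew, sub_self, zero_add,
    ← mulVec_mulVec, dotProduct_mulVec, vecMul_transpose]

lemma transpose_smul_mul_mul_smul_mul {k l R : Type*} [Fintype k] [CommRing R] (s : R)
    (A : Matrix k n R) (B : Matrix n l R) :
    (s • (A * B))ᵀ * (s • (A * B)) = (s * s) • (Bᵀ * (Aᵀ * A) * B) := by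
  simp only [transpose_smul, transpose_mul, Matrix.smul_mul, Matrix.mul_smul, smul_smul,
    Matrix.mul_assoc]

variable [DecidableEq n]

lemma isUnit_one_add_of_dotProduct_mulVec_nonneg {M : Matrix n n ℝ}
    (hM : ∀ v, 0 ≤ v ⬝ᵥ M *ᵥ v) : IsUnit (1 + M) := by
  rw [← mulVec_injective_iff_isUnit, ← coe_mulVecLin, injective_iff_map_eq_zero]
  intro v hv
  rw [coe_mulVecLin] at hv
  have hquad : v ⬝ᵥ v + v ⬝ᵥ M *ᵥ v = 0 := by
    rw [← one_mulVec v, mulVec_mulVec, Matrix.mul_one, ← dotProduct_add, ← add_mulVec, hv,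
      dotProduct_zero]
  exact dotProduct_self_eq_zero.mp <| le_antisymm
    (by linarith [hM v]) (dotProduct_self_star_nonneg v)

section CommRing

variable {R : Type*} [CommRing R]

lemma nonsing_inv_mul_comm_of_commute {A B : Matrix n n R} (hA : IsUnit A)
    (h : Commute A B) : A⁻¹ * B = B * A⁻¹ := by
  have hdet := (isUnit_iff_isUnit_det A).mp hA
  calc A⁻¹ * B = A⁻¹ * (B * A) * A⁻¹ := by
        rw [Matrix.mul_assoc, Matrix.mul_assoc, mul_nonsing_inv _ hdet, Matrix.mul_one]
    _ = A⁻¹ * A * B * A⁻¹ := by rw [← h.eq]; noncomm_ring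
    _ = B * A⁻¹ := by rw [nonsing_inv_mul _ hdet, Matrix.one_mul]

theorem cayley_transpose_mul_add_eq_one {M : Matrix n n R} (Z : Matrix m n R)
    (hM : IsUnit (1 + M)) (hMZ : M + Mᵀ = (2 : R) • (Zᵀ * Z)) :
    ((1 + M)⁻¹ * (1 - M))ᵀ * ((1 + M)⁻¹ * (1 - M))
      + ((2 : R) • (Z * (1 + M)⁻¹))ᵀ * ((2 : R) • (Z * (1 + M)⁻¹)) = 1 := by
  have hdet := (isUnit_iff_isUnit_det _).mp hM
  have hcomm : Commute (1 + M) (1 - M) :=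
    (Commute.one_right _).sub_right ((Commute.one_left M).add_left (Commute.refl M))
  rw [nonsing_inv_mul_comm_of_commute hM hcomm]
  set N := (1 + M)⁻¹
  have hgap : (1 - M)ᵀ * (1 - M) + (2 : R) • (2 : R) • (Zᵀ * Z) = (1 + M)ᵀ * (1 + M) := by
    rw [← hMZ, transpose_sub, transpose_add, transpose_one]
    simp only [two_smul]
    noncomm_ring
  calc ((1 - M) * N)ᵀ * ((1 - M) * N) + ((2 : R) • (Z * N))ᵀ * ((2 : R) • (Z * N))
      = Nᵀ * ((1 - M)ᵀ * (1 - M) + (2 : R) • (2 : R) • (Zᵀ * Z)) * N := by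
        simp only [transpose_mul, transpose_smul, Matrix.smul_mul, Matrix.mul_smul, smul_smul,
          Matrix.mul_add, Matrix.add_mul, Matrix.mul_assoc]
    _ = ((1 + M) * N)ᵀ * ((1 + M) * N) := by rw [hgap, transpose_mul]; noncomm_ring
    _ = 1 := by rw [mul_nonsing_inv _ hdet, transpose_one, Matrix.one_mul]

end CommRing

theorem fromBlocks_eq_transpose_mul_self_of_transpose_mul_add_eq_one {Γ : Matrix n n ℝ}
    (hΓ : Γᵀ = Γ) (hΓu : IsUnit Γ) {U : Matrix n n ℝ} {V : Matrix m n ℝ}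
    (hUV : Uᵀ * U + Vᵀ * V = 1) (Lm : Matrix m m ℝ) :
    fromBlocks (Lmᵀ * Lm) (-((√2 • (Γ⁻¹ * Vᵀ * Lm))ᵀ * (Γ * Γ)))
        (-((Γ * Γ) * (√2 • (Γ⁻¹ * Vᵀ * Lm))))
        ((2 : ℝ) • (Γ * Γ) - (√2 • (U * Γ))ᵀ * (√2 • (U * Γ)))
      = (fromCols Lm (-(√2 • (V * Γ))))ᵀ * fromCols Lm (-(√2 • (V * Γ))) := by
  have hsq : √2 * √2 = 2 := Real.mul_self_sqrt zero_le_two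
  have hΓinv : Γ⁻¹ * Γ = 1 := nonsing_inv_mul _ ((isUnit_iff_isUnit_det _).mp hΓu)
  have hupper : (√2 • (Γ⁻¹ * Vᵀ * Lm))ᵀ * (Γ * Γ) = Lmᵀ * (√2 • (V * Γ)) := by
    simp only [transpose_smul, transpose_mul, transpose_nonsing_inv, transpose_transpose, hΓ,
      Matrix.smul_mul, Matrix.mul_smul, Matrix.mul_assoc]
    rw [← Matrix.mul_assoc Γ⁻¹, hΓinv, Matrix.one_mul]
  have hlower : (Γ * Γ) * (√2 • (Γ⁻¹ * Vᵀ * Lm)) = (√2 • (V * Γ))ᵀ * Lm := by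
    simpa only [transpose_mul, transpose_transpose, hΓ] using congrArg transpose hupper
  have hdiag : (2 : ℝ) • (Γ * Γ) - (√2 • (U * Γ))ᵀ * (√2 • (U * Γ))
      = (√2 • (V * Γ))ᵀ * (√2 • (V * Γ)) := by
    rw [sub_eq_iff_eq_add', transpose_smul_mul_mul_smul_mul, transpose_smul_mul_mul_smul_mul,
      ← smul_add, ← Matrix.add_mul, ← Matrix.mul_add, hUV, Matrix.mul_one, hΓ, hsq]
  rw [transpose_fromCols, fromRows_mul_fromCols, hupper, hlower, hdiag, transpose_neg,
    Matrix.mul_neg, Matrix.neg_mul, Matrix.neg_mul, Matrix.mul_neg, neg_neg]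

end Matrix

theorem fc_layer_parameterization_satisfies_LMI_general
    (c cm : ℕ) (Y : Matrix (Fin c) (Fin c) ℝ) (Z : Matrix (Fin cm) (Fin c) ℝ)
    (γ : Fin c → ℝ) (hγ : ∀ i, γ i ≠ 0)
    (Lm : Matrix (Fin cm) (Fin cm) ℝ)
    (M : Matrix (Fin c) (Fin c) ℝ) (hM : M = Y - Yᵀ + Zᵀ * Z)
    (U : Matrix (Fin c) (Fin c) ℝ) (hU : U = (1 + M)⁻¹ * (1 - M))
    (V : Matrix (Fin cm) (Fin c) ℝ) (hV : V = (2 : ℝ) • (Z * (1 + M)⁻¹))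
    (Γ : Matrix (Fin c) (Fin c) ℝ) (hΓ : Γ = Matrix.diagonal γ)
    (W : Matrix (Fin c) (Fin cm) ℝ) (hW : W = Real.sqrt 2 • (Γ⁻¹ * Vᵀ * Lm))
    (L : Matrix (Fin c) (Fin c) ℝ) (hL : L = Real.sqrt 2 • (U * Γ))
    (Λ : Matrix (Fin c) (Fin c) ℝ) (hΛ : Λ = Γ * Γ)
    (X : Matrix (Fin c) (Fin c) ℝ) (hX : X = Lᵀ * L)
    (Xm : Matrix (Fin cm) (Fin cm) ℝ) (hXm : Xm = Lmᵀ * Lm) :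
    (Matrix.fromBlocks Xm (-(Wᵀ * Λ)) (-(Λ * W)) ((2 : ℝ) • Λ - X)).PosSemidef := by
  subst hM hU hV hΓ hW hL hΛ hX hXm
  have hΓu : IsUnit (diagonal γ) :=
    isUnit_diagonal.mpr (Pi.isUnit_iff.mpr fun i => (hγ i).isUnit)
  have hM : IsUnit (1 + (Y - Yᵀ + Zᵀ * Z)) :=
    isUnit_one_add_of_dotProduct_mulVec_nonneg fun v => by
      rw [dotProduct_mulVec_sub_transpose_add_gram]
      exact dotProduct_self_star_nonneg _
  have hMZ : Y - Yᵀ + Zᵀ * Z + (Y - Yᵀ + Zᵀ * Z)ᵀ = (2 : ℝ) • (Zᵀ * Z) := by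
    simp only [transpose_add, transpose_sub, transpose_mul, transpose_transpose, two_smul]
    abel
  rw [fromBlocks_eq_transpose_mul_self_of_transpose_mul_add_eq_one (diagonal_transpose γ) hΓu
    (cayley_transpose_mul_add_eq_one Z hM hMZ) Lm]
  rw [← conjTranspose_eq_transpose_of_trivial]
  exact posSemidef_conjTranspose_mul_self _

/-- The direct parameterization `W = √2 Γ⁻¹ Vᵀ L₋` of a
fully-connected layer (with `(U,V)` the Cayley transform of `(Y,Z)`,
`Γ = diag(γ)`, `L = √2 U Γ`, `Λ = Γ²`, `X = Lᵀ L`, `X₋ = L₋ᵀ L₋`)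
renders the layer LMI `[[X₋, −Wᵀ Λ], [−Λ W, 2Λ − X]]` positive semidefinite. -/
theorem fc_layer_parameterization_satisfies_LMI
    (c cm : ℕ) (Y : Matrix (Fin c) (Fin c) ℝ) (Z : Matrix (Fin cm) (Fin c) ℝ)
    (γ : Fin c → ℝ) (hγ : ∀ i, γ i ≠ 0)
    (Lm : Matrix (Fin cm) (Fin cm) ℝ) (hLm : IsUnit Lm)
    (M : Matrix (Fin c) (Fin c) ℝ) (hM : M = Y - Yᵀ + Zᵀ * Z)
    (U : Matrix (Fin c) (Fin c) ℝ) (hU : U = (1 + M)⁻¹ * (1 - M))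
    (V : Matrix (Fin cm) (Fin c) ℝ) (hV : V = (2 : ℝ) • (Z * (1 + M)⁻¹))
    (Γ : Matrix (Fin c) (Fin c) ℝ) (hΓ : Γ = Matrix.diagonal γ)
    (W : Matrix (Fin c) (Fin cm) ℝ) (hW : W = Real.sqrt 2 • (Γ⁻¹ * Vᵀ * Lm))
    (L : Matrix (Fin c) (Fin c) ℝ) (hL : L = Real.sqrt 2 • (U * Γ))
    (Λ : Matrix (Fin c) (Fin c) ℝ) (hΛ : Λ = Γ * Γ)
    (X : Matrix (Fin c) (Fin c) ℝ) (hX : X = Lᵀ * L)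
    (Xm : Matrix (Fin cm) (Fin cm) ℝ) (hXm : Xm = Lmᵀ * Lm) :
    (Matrix.fromBlocks Xm (-(Wᵀ * Λ)) (-(Λ * W)) ((2 : ℝ) • Λ - X)).PosSemidef :=
  fc_layer_parameterization_satisfies_LMI_general c cm Y Z γ hγ Lm M hM U hU V hV Γ hΓ W hW L hL Λ
    hΛ X hX Xm hXm
end

section
/- Let Q ∈ ℝ^{c×c} be symmetric positive definite and let L_Q ∈ ℝ^{c×c} be an invertible matrix with L_Qᵀ L_Q = Q. Let L₋ ∈ ℝ^{c₋×c₋} be invertible with X₋ = L₋ᵀ L₋. Let Y ∈ ℝ^{c×c}, Z ∈ ℝ^{c₋×c} and let (U, V) be the Cayley transform of (Y, Z). Then W = L_Q⁻¹ Vᵀ L₋ satisfies X₋ − Wᵀ Q W ⪰ 0. -/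
/-!
Since `M + Mᵀ = 2 ZᵀZ` is positive semidefinite, `1 + M` is invertible and the Cayley transform
satisfies `UᵀU + VᵀV = 1`; hence `1 - VᵀV = UᵀU ⪰ 0`. The Schur complements of the block matrix
`[[1, V], [Vᵀ, 1]]` then give `1 - VVᵀ ⪰ 0`. Finally `L_Q` cancels in `Wᵀ Q W = L₋ᵀ V Vᵀ L₋`, so
`X₋ - Wᵀ Q W = L₋ᵀ (1 - V Vᵀ) L₋ ⪰ 0`.
-/

open Matrix

namespace Matrix

variable {m n R : Type*} [Fintype m] [Fintype n] [DecidableEq n]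

theorem posSemidef_one_sub_mul_conjTranspose_iff [Field R] [PartialOrder R] [StarRing R]
    [StarOrderedRing R] [DecidableEq m] (B : Matrix m n R) :
    (1 - B * Bᴴ).PosSemidef ↔ (1 - Bᴴ * B).PosSemidef := by
  let : Invertible (1 : Matrix m m R) := invertibleOne
  let : Invertible (1 : Matrix n n R) := invertibleOne
  simpa using (PosDef.fromBlocks₂₂ 1 B PosDef.one).symm.trans (PosDef.fromBlocks₁₁ B 1 PosDef.one)

theorem isUnit_det_of_posDef_add_conjTranspose [Field R] [PartialOrder R] [StarRing R]
    {A : Matrix n n R} (hA : (A + Aᴴ).PosDef) : IsUnit A.det := by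
  rw [isUnit_iff_ne_zero]
  intro hdet
  obtain ⟨v, hv, hAv⟩ := exists_mulVec_eq_zero_iff.mpr hdet
  have := hA.dotProduct_mulVec_pos hv
  rw [add_mulVec, dotProduct_add, hAv, dotProduct_mulVec (star v), ← star_mulVec, hAv] at this
  simp at this

/-- With `B = A⁻¹`, `2B - 1 = A⁻¹(1 - M)` and `2ZB` are the Cayley transform of `A = 1 + M`. -/
theorem transpose_mul_self_add_transpose_mul_self_eq_one [CommRing R] {A B : Matrix n n R}
    (Z : Matrix m n R) (hAB : A * B = 1) (hA : A + Aᵀ = (2 : R) • (1 + Zᵀ * Z)) :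
    ((2 : R) • B - 1)ᵀ * ((2 : R) • B - 1) + ((2 : R) • (Z * B))ᵀ * ((2 : R) • (Z * B)) = 1 := by
  have hBA : Bᵀ * Aᵀ = 1 := by rw [← transpose_mul, hAB, transpose_one]
  have hexpand :
      ((2 : R) • B - 1)ᵀ * ((2 : R) • B - 1) + ((2 : R) • (Z * B))ᵀ * ((2 : R) • (Z * B)) - 1
        = (2 : R) • (Bᵀ * ((2 : R) • (1 + Zᵀ * Z) - (A + Aᵀ)) * B
            + Bᵀ * (A * B) - Bᵀ + Bᵀ * Aᵀ * B - B) := by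
    simp only [transpose_sub, transpose_smul, transpose_one, transpose_mul, sub_mul, mul_sub,
      add_mul, mul_add, Matrix.smul_mul, Matrix.mul_smul, Matrix.mul_assoc, Matrix.one_mul,
      Matrix.mul_one]
    module
  rw [hA, hAB, hBA, sub_self] at hexpand
  simpa [sub_eq_zero] using hexpand

omit [Fintype n] [DecidableEq n] in
theorem add_transpose_cayley_eq (Y : Matrix n n ℝ) (Z : Matrix m n ℝ) :
    (Y - Yᵀ + Zᵀ * Z) + (Y - Yᵀ + Zᵀ * Z)ᵀ = (2 : ℝ) • (Zᵀ * Z) := by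
  simp only [transpose_add, transpose_sub, transpose_mul, transpose_transpose, two_smul]
  abel

theorem cayley_transpose_mul_self_add_transpose_mul_self {M : Matrix n n ℝ} (Z : Matrix m n ℝ)
    (hM : M + Mᵀ = (2 : ℝ) • (Zᵀ * Z)) :
    ((1 + M)⁻¹ * (1 - M))ᵀ * ((1 + M)⁻¹ * (1 - M))
      + ((2 : ℝ) • (Z * (1 + M)⁻¹))ᵀ * ((2 : ℝ) • (Z * (1 + M)⁻¹)) = 1 := by
  have hsym : (1 + M) + (1 + M)ᵀ = (2 : ℝ) • (1 + Zᵀ * Z) := by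
    rw [transpose_add, transpose_one, add_add_add_comm, hM, ← two_smul ℝ, smul_add]
  have hdet : IsUnit (1 + M).det := by
    refine isUnit_det_of_posDef_add_conjTranspose ?_
    rw [conjTranspose_eq_transpose_of_trivial, hsym]
    exact (PosDef.one.add_posSemidef (posSemidef_conjTranspose_mul_self Z)).smul two_pos
  have hU : (1 + M)⁻¹ * (1 - M) = (2 : ℝ) • (1 + M)⁻¹ - 1 := by
    rw [show (1 : Matrix n n ℝ) - M = (2 : ℝ) • 1 - (1 + M) by rw [two_smul]; abel,
      Matrix.mul_sub, Matrix.mul_smul, Matrix.mul_one, nonsing_inv_mul _ hdet]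
  rw [hU]
  exact transpose_mul_self_add_transpose_mul_self_eq_one Z (mul_nonsing_inv _ hdet) hsym

omit [Fintype m] in
theorem transpose_mul_transpose_mul_self_mul_cancel [CommRing R] {L : Matrix n n R}
    (hL : IsUnit L) (B : Matrix n m R) : (L⁻¹ * B)ᵀ * (Lᵀ * L) * (L⁻¹ * B) = Bᵀ * B := by
  have hdet := (isUnit_iff_isUnit_det L).mp hL
  rw [transpose_mul, transpose_nonsing_inv]
  simp only [Matrix.mul_assoc]
  rw [mul_nonsing_inv_cancel_left _ _ hdet,
    nonsing_inv_mul_cancel_left _ _ (by rwa [det_transpose])]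

end Matrix

theorem last_layer_parameterization_satisfies_LMI_general
    (c cm : ℕ)
    (Q LQ : Matrix (Fin c) (Fin c) ℝ)
    (hLQ : IsUnit LQ) (hLQQ : LQᵀ * LQ = Q)
    (Lm : Matrix (Fin cm) (Fin cm) ℝ)
    (Xm : Matrix (Fin cm) (Fin cm) ℝ) (hXm : Xm = Lmᵀ * Lm)
    (Y : Matrix (Fin c) (Fin c) ℝ) (Z : Matrix (Fin cm) (Fin c) ℝ)
    (M : Matrix (Fin c) (Fin c) ℝ) (hM : M = Y - Yᵀ + Zᵀ * Z)
    (U : Matrix (Fin c) (Fin c) ℝ) (hU : U = (1 + M)⁻¹ * (1 - M))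
    (V : Matrix (Fin cm) (Fin c) ℝ) (hV : V = (2 : ℝ) • (Z * (1 + M)⁻¹))
    (W : Matrix (Fin c) (Fin cm) ℝ) (hW : W = LQ⁻¹ * Vᵀ * Lm) :
    (Xm - Wᵀ * Q * W).PosSemidef := by
  have hUV : Uᵀ * U + Vᵀ * V = 1 := by
    subst hU hV hM
    exact cayley_transpose_mul_self_add_transpose_mul_self Z (add_transpose_cayley_eq Y Z)
  have hVV : (1 - Vᵀ * V).PosSemidef := by
    rw [← hUV, add_sub_cancel_right]
    simpa using posSemidef_conjTranspose_mul_self U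
  have hVV' : (1 - V * Vᵀ).PosSemidef := by
    simpa using (posSemidef_one_sub_mul_conjTranspose_iff V).mpr (by simpa using hVV)
  have hXW : Xm - Wᵀ * Q * W = Lmᵀ * (1 - V * Vᵀ) * Lm := by
    rw [hXm, hW, ← hLQQ, Matrix.mul_assoc LQ⁻¹, transpose_mul_transpose_mul_self_mul_cancel hLQ]
    simp only [transpose_mul, transpose_transpose, Matrix.mul_sub, Matrix.sub_mul,
      Matrix.mul_one, Matrix.mul_assoc]
  rw [hXW]
  simpa using hVV'.conjTranspose_mul_mul_same Lm

/-- The parameterization `W = L_Q⁻¹ Vᵀ L₋` of the last (affine)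
layer, with `(U,V)` the Cayley transform of `(Y,Z)`, `L_Qᵀ L_Q = Q` and
`X₋ = L₋ᵀ L₋`, satisfies `X₋ − Wᵀ Q W ⪰ 0`. -/
theorem last_layer_parameterization_satisfies_LMI
    (c cm : ℕ)
    (Q LQ : Matrix (Fin c) (Fin c) ℝ) (hQpd : Q.PosDef)
    (hLQ : IsUnit LQ) (hLQQ : LQᵀ * LQ = Q)
    (Lm : Matrix (Fin cm) (Fin cm) ℝ) (hLm : IsUnit Lm)
    (Xm : Matrix (Fin cm) (Fin cm) ℝ) (hXm : Xm = Lmᵀ * Lm)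
    (Y : Matrix (Fin c) (Fin c) ℝ) (Z : Matrix (Fin cm) (Fin c) ℝ)
    (M : Matrix (Fin c) (Fin c) ℝ) (hM : M = Y - Yᵀ + Zᵀ * Z)
    (U : Matrix (Fin c) (Fin c) ℝ) (hU : U = (1 + M)⁻¹ * (1 - M))
    (V : Matrix (Fin cm) (Fin c) ℝ) (hV : V = (2 : ℝ) • (Z * (1 + M)⁻¹))
    (W : Matrix (Fin c) (Fin cm) ℝ) (hW : W = LQ⁻¹ * Vᵀ * Lm) :
    (Xm - Wᵀ * Q * W).PosSemidef :=
  last_layer_parameterization_satisfies_LMI_general c cm Q LQ hLQ hLQQ Lm Xm hXm Y Z M hM U hU V hV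
    W hW
end

section
/- Let A ∈ ℝ^{n×n} be nilpotent with A^p = 0, let B ∈ ℝ^{n×c₋}, let X₋ ∈ ℝ^{c₋×c₋} be symmetric positive definite, let ε > 0 and H ∈ ℝ^{n×n}. Define T = Σ_{k=0}^{p−1} A^k (B X₋⁻¹ Bᵀ + Hᵀ H + ε I)(Aᵀ)^k. Then T is positive definite, and with P = T⁻¹ the matrix F = [[P − Aᵀ P A, −Aᵀ P B], [−Bᵀ P A, X₋ − Bᵀ P B]] is positive definite. -/
/-! `T` is a sum of congruences of `Q = B X₋⁻¹ Bᵀ + Hᵀ H + ε I ≻ 0` containing `Q` itself, so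
`T ≻ 0`, and since `A ^ p = 0` it solves the Stein equation `T = A T Aᵀ + Q`. Write
`F = D - Mᵀ T⁻¹ M` with `D = diag(P, X₋)` and `M = [A B]`. The block matrix `[[T, M], [Mᵀ, D]]`
has Schur complement `T - M D⁻¹ Mᵀ = T - A T Aᵀ - B X₋⁻¹ Bᵀ = Hᵀ H + ε I ≻ 0` with respect to
`D`, so it is positive definite, and therefore so is its Schur complement `F` with respect to
`T`. -/

open Matrix Finset
open scoped ComplexOrder

namespace Matrix

variable {𝕜 : Type*} [RCLike 𝕜] {m n : Type*} [Fintype m] [Fintype n] [DecidableEq m]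
  [DecidableEq n]

lemma posDef_iff_posSemidef_and_det_ne_zero {M : Matrix n n 𝕜} :
    M.PosDef ↔ M.PosSemidef ∧ M.det ≠ 0 :=
  ⟨fun h => ⟨h.posSemidef, h.det_pos.ne'⟩, fun h => h.1.posDef_iff_det_ne_zero.mpr h.2⟩

lemma PosDef.posDef_fromBlocks₁₁_iff {A : Matrix m m 𝕜} (hA : A.PosDef) (B : Matrix m n 𝕜)
    (D : Matrix n n 𝕜) : (fromBlocks A B Bᴴ D).PosDef ↔ (D - Bᴴ * A⁻¹ * B).PosDef := by
  let := hA.isUnit.invertible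
  rw [posDef_iff_posSemidef_and_det_ne_zero, posDef_iff_posSemidef_and_det_ne_zero,
    hA.fromBlocks₁₁ B D, det_fromBlocks₁₁, invOf_eq_nonsing_inv, mul_ne_zero_iff,
    and_iff_right hA.det_pos.ne']

lemma PosDef.posDef_fromBlocks₂₂_iff (A : Matrix m m 𝕜) (B : Matrix m n 𝕜) {D : Matrix n n 𝕜}
    (hD : D.PosDef) : (fromBlocks A B Bᴴ D).PosDef ↔ (A - B * D⁻¹ * Bᴴ).PosDef := by
  let := hD.isUnit.invertible
  rw [posDef_iff_posSemidef_and_det_ne_zero, posDef_iff_posSemidef_and_det_ne_zero,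
    PosDef.fromBlocks₂₂ A B hD, det_fromBlocks₂₂, invOf_eq_nonsing_inv, mul_ne_zero_iff,
    and_iff_right hD.det_pos.ne']

lemma PosDef.sub_conjTranspose_mul_inv_mul {S : Matrix m m 𝕜} {D : Matrix n n 𝕜}
    (hS : S.PosDef) (hD : D.PosDef) {M : Matrix m n 𝕜} (h : (S - M * D⁻¹ * Mᴴ).PosDef) :
    (D - Mᴴ * S⁻¹ * M).PosDef :=
  (hS.posDef_fromBlocks₁₁_iff M D).mp ((PosDef.posDef_fromBlocks₂₂_iff S M hD).mpr h)

lemma PosDef.fromBlocks_zero_zero {A : Matrix m m 𝕜} {D : Matrix n n 𝕜} (hA : A.PosDef)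
    (hD : D.PosDef) : (fromBlocks A 0 0 D).PosDef := by
  simpa using (hA.posDef_fromBlocks₁₁_iff 0 D).mpr (by simpa using hD)

lemma PosDef.sum_range_pow_mul_mul_conjTranspose_pow {Q : Matrix n n 𝕜} (hQ : Q.PosDef)
    (A : Matrix n n 𝕜) {p : ℕ} (hp : p ≠ 0) : (∑ k ∈ range p, A ^ k * Q * Aᴴ ^ k).PosDef := by
  obtain ⟨p, rfl⟩ := Nat.exists_eq_succ_of_ne_zero hp
  rw [sum_range_succ', pow_zero, pow_zero, Matrix.one_mul, Matrix.mul_one]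
  refine PosDef.posSemidef_add (posSemidef_sum _ fun k _ => ?_) hQ
  simpa [conjTranspose_pow] using hQ.posSemidef.mul_mul_conjTranspose_same (A ^ (k + 1))

end Matrix

lemma mul_sum_range_pow_mul_mul_pow_mul_add {R : Type*} [Semiring R] (a b q : R) (p : ℕ) :
    a * (∑ k ∈ range p, a ^ k * q * b ^ k) * b + q =
      ∑ k ∈ range p, a ^ k * q * b ^ k + a ^ p * q * b ^ p := by
  have shift : ∀ k, a * (a ^ k * q * b ^ k) * b = a ^ (k + 1) * q * b ^ (k + 1) := fun k => by
    rw [pow_succ', pow_succ]; simp only [mul_assoc]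
  induction p with
  | zero => simp
  | succ p ih => rw [sum_range_succ, mul_add, add_mul, add_right_comm, ih, shift]

/-- The Gramian-type parameterization
`T = Σ_{k<p} A^k (B X₋⁻¹ Bᵀ + Hᵀ H + ε I)(Aᵀ)^k` for nilpotent `A` is positive
definite and, with `P = T⁻¹`, renders the state-input dissipativity block
`F = [[P − Aᵀ P A, −Aᵀ P B], [−Bᵀ P A, X₋ − Bᵀ P B]]` positive definite. -/
theorem gramian_parameterization_renders_F_posdef
    (n cm p : ℕ) (A : Matrix (Fin n) (Fin n) ℝ) (hA : A ^ p = 0)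
    (B : Matrix (Fin n) (Fin cm) ℝ)
    (Xm : Matrix (Fin cm) (Fin cm) ℝ) (hXm : Xm.PosDef)
    (ε : ℝ) (hε : 0 < ε) (H : Matrix (Fin n) (Fin n) ℝ)
    (T : Matrix (Fin n) (Fin n) ℝ)
    (hT : T = ∑ k ∈ Finset.range p,
      A ^ k * (B * Xm⁻¹ * Bᵀ + Hᵀ * H + ε • (1 : Matrix (Fin n) (Fin n) ℝ)) * Aᵀ ^ k)
    (P : Matrix (Fin n) (Fin n) ℝ) (hP : P = T⁻¹) :
    T.PosDef ∧
    (Matrix.fromBlocks (P - Aᵀ * P * A) (-(Aᵀ * P * B))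
      (-(Bᵀ * P * A)) (Xm - Bᵀ * P * B)).PosDef := by
  simp only [← conjTranspose_eq_transpose_of_trivial] at hT ⊢
  set Q := B * Xm⁻¹ * Bᴴ + Hᴴ * H + ε • (1 : Matrix (Fin n) (Fin n) ℝ) with hQ
  have hHε_pos : (Hᴴ * H + ε • 1 : Matrix (Fin n) (Fin n) ℝ).PosDef :=
    PosDef.posSemidef_add (posSemidef_conjTranspose_mul_self H) (PosDef.one.smul hε)
  have hQ_pos : Q.PosDef := by
    rw [hQ, add_assoc]
    exact PosDef.posSemidef_add (hXm.inv.posSemidef.mul_mul_conjTranspose_same B) hHε_pos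
  have hT_pos : T.PosDef := by
    rcases eq_or_ne p 0 with rfl | hp
    · have := subsingleton_of_zero_eq_one (hA.symm.trans (pow_zero A))
      rwa [Subsingleton.elim T Q]
    · exact hT ▸ hQ_pos.sum_range_pow_mul_mul_conjTranspose_pow A hp
  have hStein : A * T * Aᴴ + Q = T := by
    have := mul_sum_range_pow_mul_mul_pow_mul_add A Aᴴ Q p
    rwa [hA, Matrix.zero_mul, Matrix.zero_mul, add_zero, ← hT] at this
  have hP_pos : P.PosDef := hP ▸ hT_pos.inv
  have hD_inv : (fromBlocks P 0 0 Xm)⁻¹ = fromBlocks T 0 0 Xm⁻¹ := by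
    rw [inv_fromBlocks_zero₁₂_of_isUnit_iff P 0 Xm (iff_of_true hP_pos.isUnit hXm.isUnit), hP,
      nonsing_inv_nonsing_inv T ((isUnit_iff_isUnit_det T).mp hT_pos.isUnit)]
    simp
  have hF : fromBlocks (P - Aᴴ * P * A) (-(Aᴴ * P * B)) (-(Bᴴ * P * A)) (Xm - Bᴴ * P * B) =
      fromBlocks P 0 0 Xm - (fromCols A B)ᴴ * T⁻¹ * fromCols A B := by
    rw [conjTranspose_fromCols_eq_fromRows_conjTranspose, fromRows_mul, fromRows_mul_fromCols, ← hP]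
    ext (i | i) (j | j) <;> simp
  have hSchur : T - fromCols A B * (fromBlocks P 0 0 Xm)⁻¹ * (fromCols A B)ᴴ =
      Hᴴ * H + ε • 1 := by
    rw [hD_inv, conjTranspose_fromCols_eq_fromRows_conjTranspose, fromCols_mul_fromBlocks,
      fromCols_mul_fromRows]
    nth_rewrite 1 [← hStein]
    simp only [Matrix.mul_zero, add_zero, zero_add, hQ]
    abel
  refine ⟨hT_pos, hF ▸ hT_pos.sub_conjTranspose_mul_inv_mul (hP_pos.fromBlocks_zero_zero hXm) ?_⟩
  rwa [hSchur]
end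

section
/- Let F ∈ ℝ^{m×m} be symmetric positive definite and let L_F ∈ ℝ^{m×m} be invertible with L_Fᵀ L_F = F. Let Y ∈ ℝ^{c×c}, Z ∈ ℝ^{m×c}, let (U, V) be the Cayley transform of (Y, Z), let γ ∈ ℝ^c have all entries nonzero, and set Γ = diag(γ), Λ = Γ², Ĉ = √2 · Γ⁻¹ Vᵀ L_F, L = √2 · U Γ, and X = Lᵀ L. Then the block matrix [[F, −Ĉᵀ Λ], [−Λ Ĉ, 2Λ − X]] is positive semidefinite. -/
/-!
With `B = -√2 V Γ`, the LMI matrix is the Gram matrix `[L_F B]ᵀ [L_F B]`: the off-diagonal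
blocks match because `Γ⁻¹ Λ = Γ`, and the lower-right block because `Vᵀ V = I - Uᵀ U`. That
Cayley identity holds because `I ± M` commute and `M + Mᵀ = 2 Zᵀ Z` gives
`(I - M)ᵀ (I - M) + 4 Zᵀ Z = (I + M)ᵀ (I + M)`; the same relation makes the symmetric part of
`I + M` positive definite, so `I + M` is invertible.
-/

open Matrix

theorem isUnit_det_of_posDef_add_transpose {n : Type*} [Fintype n] [DecidableEq n]
    {A : Matrix n n ℝ} (hA : (A + Aᵀ).PosDef) : IsUnit A.det := by
  rw [isUnit_iff_ne_zero]
  intro hdet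
  obtain ⟨v, hv, hAv⟩ := exists_mulVec_eq_zero_iff.mpr hdet
  have hpos := hA.dotProduct_mulVec_pos hv
  rw [star_trivial, add_mulVec, hAv, zero_add, dotProduct_mulVec, vecMul_transpose, hAv,
    zero_dotProduct] at hpos
  exact hpos.false

theorem cayley_transpose_mul_add_transpose_mul_eq_one {R : Type*} [CommRing R]
    {m n : Type*} [Fintype m] [Fintype n] [DecidableEq n]
    {M : Matrix n n R} {Z : Matrix m n R} (hM : M + Mᵀ = (2 : R) • (Zᵀ * Z))
    (hdet : IsUnit (1 + M).det) :
    ((1 + M)⁻¹ * (1 - M))ᵀ * ((1 + M)⁻¹ * (1 - M))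
      + ((2 : R) • (Z * (1 + M)⁻¹))ᵀ * ((2 : R) • (Z * (1 + M)⁻¹)) = 1 := by
  set N := 1 + M
  let := invertibleOfIsUnitDet N hdet
  have hcomm : N⁻¹ * (1 - M) = (1 - M) * N⁻¹ := by
    rw [← invOf_eq_nonsing_inv]
    exact ((Commute.one_left _).add_left
      ((Commute.one_right M).sub_right (Commute.refl M))).invOf_left.eq
  have hgram : (1 - M)ᵀ * (1 - M) + (4 : R) • (Zᵀ * Z) = Nᵀ * N := by
    have h4 : (4 : R) • (Zᵀ * Z) = (2 : R) • (M + Mᵀ) := by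
      rw [hM, smul_smul]; norm_num
    rw [h4, two_smul, transpose_sub, transpose_add, transpose_one]
    simp only [N]
    noncomm_ring
  calc _ = (N⁻¹)ᵀ * ((1 - M)ᵀ * (1 - M) + (4 : R) • (Zᵀ * Z)) * N⁻¹ := by
        rw [hcomm]
        simp only [transpose_mul, transpose_smul, Matrix.mul_add, Matrix.add_mul, Matrix.smul_mul,
          Matrix.mul_smul, smul_smul, Matrix.mul_assoc]
        norm_num
    _ = (N * N⁻¹)ᵀ * (N * N⁻¹) := by
        rw [hgram, transpose_mul]; simp only [Matrix.mul_assoc]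
    _ = 1 := by rw [mul_nonsing_inv _ hdet, transpose_one, Matrix.one_mul]

theorem posSemidef_fromBlocks_transpose_mul {k m n : Type*} [Fintype k] [Fintype m] [Fintype n]
    (A : Matrix k m ℝ) (B : Matrix k n ℝ) :
    (fromBlocks (Aᵀ * A) (Aᵀ * B) (Bᵀ * A) (Bᵀ * B)).PosSemidef := by
  simpa only [conjTranspose_eq_transpose_of_trivial, transpose_fromCols, fromRows_mul_fromCols]
    using posSemidef_conjTranspose_mul_self (fromCols A B)

theorem posSemidef_lmi_of_transpose_mul_add_eq_one {m n : Type*} [Fintype m] [Fintype n]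
    [DecidableEq n] (LF : Matrix m m ℝ) {U : Matrix n n ℝ} {V : Matrix m n ℝ}
    (hUV : Uᵀ * U + Vᵀ * V = 1) {Γ : Matrix n n ℝ} (hΓ : Γᵀ = Γ) (hΓdet : IsUnit Γ.det) :
    (fromBlocks (LFᵀ * LF) (-((√2 • (Γ⁻¹ * Vᵀ * LF))ᵀ * (Γ * Γ)))
      (-((Γ * Γ) * √2 • (Γ⁻¹ * Vᵀ * LF)))
      ((2 : ℝ) • (Γ * Γ) - (√2 • (U * Γ))ᵀ * (√2 • (U * Γ)))).PosSemidef := by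
  set B := -(√2 • (V * Γ))
  have hsqrt : √2 * √2 = 2 := Real.mul_self_sqrt zero_le_two
  have h12 : LFᵀ * B = -((√2 • (Γ⁻¹ * Vᵀ * LF))ᵀ * (Γ * Γ)) := by
    simp only [B, transpose_smul, transpose_mul, transpose_nonsing_inv, hΓ, transpose_transpose,
      Matrix.mul_neg, Matrix.smul_mul, Matrix.mul_smul, Matrix.mul_assoc,
      nonsing_inv_mul_cancel_left _ _ hΓdet]
  have h21 : Bᵀ * LF = -((Γ * Γ) * √2 • (Γ⁻¹ * Vᵀ * LF)) := by
    simp only [B, transpose_neg, transpose_smul, transpose_mul, hΓ, Matrix.neg_mul,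
      Matrix.smul_mul, Matrix.mul_smul, Matrix.mul_assoc, mul_nonsing_inv_cancel_left _ _ hΓdet]
  have h22 : Bᵀ * B = (2 : ℝ) • (Γ * Γ) - (√2 • (U * Γ))ᵀ * (√2 • (U * Γ)) := by
    have hVV : Vᵀ * V = 1 - Uᵀ * U := eq_sub_of_add_eq' hUV
    calc Bᵀ * B = (2 : ℝ) • (Γ * (Vᵀ * V) * Γ) := by
          simp only [B, transpose_neg, transpose_smul, transpose_mul, hΓ, Matrix.neg_mul,
            Matrix.mul_neg, Matrix.smul_mul, Matrix.mul_smul, smul_neg, neg_neg, smul_smul, hsqrt,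
            Matrix.mul_assoc]
      _ = _ := by
          simp only [hVV, transpose_smul, transpose_mul, hΓ, Matrix.smul_mul, Matrix.mul_smul,
            smul_smul, hsqrt, ← smul_sub]
          congr 1; noncomm_ring
  rw [← h12, ← h21, ← h22]
  exact posSemidef_fromBlocks_transpose_mul LF B

theorem conv1d_parameterization_satisfies_LMI_general
    (m c : ℕ)
    (F : Matrix (Fin m) (Fin m) ℝ)
    (LF : Matrix (Fin m) (Fin m) ℝ) (hLFF : LFᵀ * LF = F)
    (Y : Matrix (Fin c) (Fin c) ℝ) (Z : Matrix (Fin m) (Fin c) ℝ)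
    (M : Matrix (Fin c) (Fin c) ℝ) (hM : M = Y - Yᵀ + Zᵀ * Z)
    (U : Matrix (Fin c) (Fin c) ℝ) (hU : U = (1 + M)⁻¹ * (1 - M))
    (V : Matrix (Fin m) (Fin c) ℝ) (hV : V = (2 : ℝ) • (Z * (1 + M)⁻¹))
    (γ : Fin c → ℝ) (hγ : ∀ i, γ i ≠ 0)
    (Γ : Matrix (Fin c) (Fin c) ℝ) (hΓ : Γ = Matrix.diagonal γ)
    (Λ : Matrix (Fin c) (Fin c) ℝ) (hΛ : Λ = Γ * Γ)
    (Ch : Matrix (Fin c) (Fin m) ℝ) (hCh : Ch = Real.sqrt 2 • (Γ⁻¹ * Vᵀ * LF))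
    (L : Matrix (Fin c) (Fin c) ℝ) (hL : L = Real.sqrt 2 • (U * Γ))
    (X : Matrix (Fin c) (Fin c) ℝ) (hX : X = Lᵀ * L) :
    (Matrix.fromBlocks F (-(Chᵀ * Λ)) (-(Λ * Ch)) ((2 : ℝ) • Λ - X)).PosSemidef := by
  subst hLFF hU hV hΛ hCh hL hX
  have hM_add_transpose : M + Mᵀ = (2 : ℝ) • (Zᵀ * Z) := by
    simp only [hM, transpose_add, transpose_sub, transpose_mul, transpose_transpose, two_smul]
    abel
  have hdet : IsUnit (1 + M).det := by
    refine isUnit_det_of_posDef_add_transpose ?_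
    have hsym : 1 + M + (1 + M)ᵀ = (2 : ℝ) • (1 + Zᵀ * Z) := by
      rw [transpose_add, transpose_one, smul_add, ← hM_add_transpose, two_smul]
      abel
    rw [hsym]
    exact (PosDef.one.add_posSemidef (posSemidef_conjTranspose_mul_self Z)).smul two_pos
  have hΓdet : IsUnit Γ.det := by
    rw [hΓ, det_diagonal, isUnit_iff_ne_zero]
    exact Finset.prod_ne_zero_iff.mpr fun i _ => hγ i
  exact posSemidef_lmi_of_transpose_mul_add_eq_one LF
    (cayley_transpose_mul_add_transpose_mul_eq_one hM_add_transpose hdet)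
    (by rw [hΓ, diagonal_transpose]) hΓdet

/-- The parameterization `Ĉ = √2 Γ⁻¹ Vᵀ L_F` of a 1-D
convolutional layer (with `(U,V)` the Cayley transform of `(Y,Z)`,
`Γ = diag(γ)`, `Λ = Γ²`, `L = √2 U Γ`, `X = Lᵀ L`, `L_Fᵀ L_F = F`) renders
the LMI `[[F, −Ĉᵀ Λ], [−Λ Ĉ, 2Λ − X]]` positive semidefinite. -/
theorem conv1d_parameterization_satisfies_LMI
    (m c : ℕ)
    (F : Matrix (Fin m) (Fin m) ℝ) (hF : F.PosDef)
    (LF : Matrix (Fin m) (Fin m) ℝ) (hLF : IsUnit LF) (hLFF : LFᵀ * LF = F)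
    (Y : Matrix (Fin c) (Fin c) ℝ) (Z : Matrix (Fin m) (Fin c) ℝ)
    (M : Matrix (Fin c) (Fin c) ℝ) (hM : M = Y - Yᵀ + Zᵀ * Z)
    (U : Matrix (Fin c) (Fin c) ℝ) (hU : U = (1 + M)⁻¹ * (1 - M))
    (V : Matrix (Fin m) (Fin c) ℝ) (hV : V = (2 : ℝ) • (Z * (1 + M)⁻¹))
    (γ : Fin c → ℝ) (hγ : ∀ i, γ i ≠ 0)
    (Γ : Matrix (Fin c) (Fin c) ℝ) (hΓ : Γ = Matrix.diagonal γ)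
    (Λ : Matrix (Fin c) (Fin c) ℝ) (hΛ : Λ = Γ * Γ)
    (Ch : Matrix (Fin c) (Fin m) ℝ) (hCh : Ch = Real.sqrt 2 • (Γ⁻¹ * Vᵀ * LF))
    (L : Matrix (Fin c) (Fin c) ℝ) (hL : L = Real.sqrt 2 • (U * Γ))
    (X : Matrix (Fin c) (Fin c) ℝ) (hX : X = Lᵀ * L) :
    (Matrix.fromBlocks F (-(Chᵀ * Λ)) (-(Λ * Ch)) ((2 : ℝ) • Λ - X)).PosSemidef :=
  conv1d_parameterization_satisfies_LMI_general m c F LF hLFF Y Z M hM U hU V hV γ hγ Γ hΓ Λ hΛ Ch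
    hCh L hL X hX
end

section
/- Let F ∈ ℝ^{m×m} be symmetric positive definite and let L_F ∈ ℝ^{m×m} be invertible with L_Fᵀ L_F = F. Let γ̃ ∈ ℝ^c have all entries nonzero and set Γ̃ = diag(γ̃). Let X ∈ ℝ^{c×c} be diagonal with positive diagonal entries, set Λ = (Γ̃² + X)/2, and let Ũ ∈ ℝ^{m×c} satisfy Ũᵀ Ũ = I_c. Then Λ is invertible and Ĉ = Λ⁻¹ Γ̃ Ũᵀ L_F satisfies that the block matrix [[F, −Ĉᵀ Λ], [−Λ Ĉ, 2Λ − X]] is positive semidefinite. -/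
/-!
With `B = Ũ Γ̃`, invertibility of the diagonal `Λ` gives `Λ Ĉ = Bᵀ L_F`, and `Ũᵀ Ũ = I` gives
`2Λ − X = Γ̃² = Bᵀ B`. Hence the block matrix is the Gram matrix `Mᵀ M` of `M = [L_F, −B]`.
-/

open Matrix

namespace Matrix

variable {k m n R : Type*} [Fintype k] [Fintype m] [Fintype n]

theorem posSemidef_fromBlocks_conjTranspose_mul_self [Ring R] [PartialOrder R] [StarRing R]
    [StarOrderedRing R] (A : Matrix k m R) (B : Matrix k n R) :
    (fromBlocks (Aᴴ * A) (Aᴴ * B) (Bᴴ * A) (Bᴴ * B)).PosSemidef := by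
  simpa only [conjTranspose_fromCols_eq_fromRows_conjTranspose, fromRows_mul_fromCols] using
    posSemidef_conjTranspose_mul_self (fromCols A B)

theorem half_smul_diagonal_mul_self_add_diagonal [Field R] [DecidableEq n] (a b : n → R) :
    (2⁻¹ : R) • (diagonal a * diagonal a + diagonal b) =
      diagonal fun i => 2⁻¹ * (a i * a i + b i) := by
  ext i j
  by_cases h : i = j <;> simp [h]

end Matrix

theorem conv1d_maxpool_parameterization_satisfies_LMI_general
    (m c : ℕ)
    (F : Matrix (Fin m) (Fin m) ℝ)
    (LF : Matrix (Fin m) (Fin m) ℝ) (hLFF : LFᵀ * LF = F)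
    (γt : Fin c → ℝ)
    (x : Fin c → ℝ) (hx : ∀ i, 0 < x i)
    (X : Matrix (Fin c) (Fin c) ℝ) (hX : X = Matrix.diagonal x)
    (Λ : Matrix (Fin c) (Fin c) ℝ)
    (hΛ : Λ = (2⁻¹ : ℝ) • (Matrix.diagonal γt * Matrix.diagonal γt + X))
    (Ut : Matrix (Fin m) (Fin c) ℝ) (hUt : Utᵀ * Ut = 1)
    (Ch : Matrix (Fin c) (Fin m) ℝ)
    (hCh : Ch = Λ⁻¹ * Matrix.diagonal γt * Utᵀ * LF) :
    IsUnit Λ ∧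
    (Matrix.fromBlocks F (-(Chᵀ * Λ)) (-(Λ * Ch)) ((2 : ℝ) • Λ - X)).PosSemidef := by
  have hΛdiag : Λ = diagonal fun i => 2⁻¹ * (γt i * γt i + x i) := by
    rw [hΛ, hX, half_smul_diagonal_mul_self_add_diagonal]
  have hΛunit : IsUnit Λ := by
    rw [hΛdiag, isUnit_diagonal, Pi.isUnit_iff]
    exact fun i =>
      (mul_pos (by norm_num) (add_pos_of_nonneg_of_pos (mul_self_nonneg _) (hx i))).ne'.isUnit
  refine ⟨hΛunit, ?_⟩
  set B := Ut * diagonal γt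
  have hΛCh : Λ * Ch = Bᵀ * LF := by
    rw [hCh, transpose_mul, diagonal_transpose, Matrix.mul_assoc, Matrix.mul_assoc,
      mul_nonsing_inv_cancel_left _ _ ((isUnit_iff_isUnit_det Λ).mp hΛunit), Matrix.mul_assoc]
  have hChΛ : Chᵀ * Λ = LFᵀ * B := by
    have hΛsymm : Λᵀ = Λ := by rw [hΛdiag, diagonal_transpose]
    rw [← hΛsymm, ← transpose_mul, hΛCh, transpose_mul, transpose_transpose]
  have hB : (2 : ℝ) • Λ - X = Bᵀ * B := by
    rw [transpose_mul, Matrix.mul_assoc, ← Matrix.mul_assoc Utᵀ, hUt, Matrix.one_mul,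
      diagonal_transpose, hΛ, smul_smul]
    norm_num
  have hGram := posSemidef_fromBlocks_conjTranspose_mul_self LF (-B)
  simp only [conjTranspose_eq_transpose_of_trivial, transpose_neg, Matrix.mul_neg,
    Matrix.neg_mul, neg_neg] at hGram
  rwa [hLFF, ← hChΛ, ← hΛCh, ← hB] at hGram

/-- Parameterization of a 1-D convolutional layer followed by a
maximum pooling layer: with `Γ̃ = diag(γ̃)`, diagonal `X = diag(x) ≻ 0`,
`Λ = (Γ̃² + X)/2`, `Ũᵀ Ũ = I` and `Ĉ = Λ⁻¹ Γ̃ Ũᵀ L_F`, the matrix `Λ` is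
invertible and `[[F, −Ĉᵀ Λ], [−Λ Ĉ, 2Λ − X]]` is positive semidefinite. -/
theorem conv1d_maxpool_parameterization_satisfies_LMI
    (m c : ℕ)
    (F : Matrix (Fin m) (Fin m) ℝ) (hF : F.PosDef)
    (LF : Matrix (Fin m) (Fin m) ℝ) (hLF : IsUnit LF) (hLFF : LFᵀ * LF = F)
    (γt : Fin c → ℝ) (hγt : ∀ i, γt i ≠ 0)
    (x : Fin c → ℝ) (hx : ∀ i, 0 < x i)
    (X : Matrix (Fin c) (Fin c) ℝ) (hX : X = Matrix.diagonal x)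
    (Λ : Matrix (Fin c) (Fin c) ℝ)
    (hΛ : Λ = (2⁻¹ : ℝ) • (Matrix.diagonal γt * Matrix.diagonal γt + X))
    (Ut : Matrix (Fin m) (Fin c) ℝ) (hUt : Utᵀ * Ut = 1)
    (Ch : Matrix (Fin c) (Fin m) ℝ)
    (hCh : Ch = Λ⁻¹ * Matrix.diagonal γt * Utᵀ * LF) :
    IsUnit Λ ∧
    (Matrix.fromBlocks F (-(Chᵀ * Λ)) (-(Λ * Ch)) ((2 : ℝ) • Λ - X)).PosSemidef :=
  conv1d_maxpool_parameterization_satisfies_LMI_general m c F LF hLFF γt x hx X hX Λ hΛ Ut hUt Ch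
    hCh
end

section
/- Let T ∈ ℝ^{n×n} be diagonal with positive diagonal entries, let W ∈ ℝ^{m×n}, and suppose there exists a diagonal matrix Q ∈ ℝ^{n×n} with positive diagonal entries such that the matrix M = T − Q Wᵀ W Q⁻¹ is symmetric, has positive diagonal entries, and is strictly diagonally dominant, i.e., |M_{ii}| > Σ_{j≠i} |M_{ij}| for all i = 1, …, n. Then T − Wᵀ W is positive definite. -/
/-!
Since `M` and `Wᵀ W` are symmetric, so is `Q Wᵀ W Q⁻¹ = T - M`; its entries are
`qᵢ (Wᵀ W)ᵢⱼ / qⱼ`, and symmetry gives `(qᵢ² - qⱼ²) (Wᵀ W)ᵢⱼ = 0`, so for positive `q` the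
conjugation changes nothing and `M = T - Wᵀ W`. A symmetric, strictly diagonally dominant
matrix with positive diagonal is positive definite: by Gershgorin every eigenvalue `μ`
satisfies `Mₖₖ - μ ≤ ∑_{j ≠ k} |Mₖⱼ| < Mₖₖ` for some `k`.
-/

open Matrix Finset

open scoped ComplexOrder

namespace Matrix

variable {n : Type*} [Fintype n] [DecidableEq n]

theorem IsHermitian.hasEigenvalue_eigenvalues {𝕜 : Type*} [RCLike 𝕜] {A : Matrix n n 𝕜}
    (hA : A.IsHermitian) (i : n) :
    Module.End.HasEigenvalue (toLin' A) (hA.eigenvalues i : 𝕜) := by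
  refine Module.End.hasEigenvalue_of_hasEigenvector (x := ⇑(hA.eigenvectorBasis i)) ⟨?_, ?_⟩
  · rw [Module.End.mem_eigenspace_iff, toLin'_apply, hA.mulVec_eigenvectorBasis,
      RCLike.real_smul_eq_coe_smul (K := 𝕜)]
  · simpa using (hA.eigenvectorBasis.orthonormal.ne_zero i)

theorem IsHermitian.posDef_of_sum_row_lt_diag {𝕜 : Type*} [RCLike 𝕜] {A : Matrix n n 𝕜}
    (hA : A.IsHermitian) (h : ∀ k, ∑ j ∈ univ.erase k, ‖A k j‖ < RCLike.re (A k k)) :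
    A.PosDef := by
  refine hA.posDef_iff_eigenvalues_pos.mpr fun i => ?_
  obtain ⟨k, hk⟩ := eigenvalue_mem_ball (hA.hasEigenvalue_eigenvalues i)
  rw [mem_closedBall_iff_norm'] at hk
  have hre : RCLike.re (A k k) - hA.eigenvalues i ≤ ‖A k k - hA.eigenvalues i‖ := by
    simpa using RCLike.re_le_norm (A k k - hA.eigenvalues i)
  linarith [h k]

theorem diagonal_mul_mul_inv_diagonal_apply {K : Type*} [Field K] {d : n → K}
    (hd : ∀ i, d i ≠ 0) (A : Matrix n n K) (i j : n) :
    (diagonal d * A * (diagonal d)⁻¹) i j = d i * A i j / d j := by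
  have hinv : (diagonal d)⁻¹ = diagonal d⁻¹ :=
    inv_eq_right_inv (by simp [diagonal_mul_diagonal, hd])
  simp [hinv, div_eq_mul_inv]

variable {K : Type*} [Field K] [LinearOrder K] [IsStrictOrderedRing K]

theorem IsSymm.diagonal_mul_mul_inv_diagonal_eq_self {A : Matrix n n K} (hA : A.IsSymm)
    {d : n → K} (hd : ∀ i, 0 < d i) (h : (diagonal d * A * (diagonal d)⁻¹).IsSymm) :
    diagonal d * A * (diagonal d)⁻¹ = A := by
  have hd0 i : d i ≠ 0 := (hd i).ne'
  ext i j
  have hij := IsSymm.apply h i j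
  simp only [diagonal_mul_mul_inv_diagonal_apply hd0, hA.apply] at hij ⊢
  have hi := hd0 i
  have hj := hd0 j
  have hsq : (d i - d j) * ((d i + d j) * A i j) = 0 := by
    field_simp at hij
    linear_combination -hij
  rcases mul_eq_zero.mp hsq with hdij | hA0
  · rw [sub_eq_zero.mp hdij]
    field_simp
  · rw [(mul_eq_zero.mp hA0).resolve_left (by linarith [hd i, hd j])]
    simp

end Matrix

theorem diagonally_dominant_similarity_implies_posdef_general
    (n m : ℕ) (t : Fin n → ℝ)
    (W : Matrix (Fin m) (Fin n) ℝ)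
    (q : Fin n → ℝ) (hq : ∀ i, 0 < q i)
    (M : Matrix (Fin n) (Fin n) ℝ)
    (hM : M = Matrix.diagonal t -
      Matrix.diagonal q * Wᵀ * W * (Matrix.diagonal q)⁻¹)
    (hMsymm : M.IsSymm)
    (hMdiag : ∀ i, 0 < M i i)
    (hMdd : ∀ i, ∑ j ∈ Finset.univ.erase i, |M i j| < |M i i|) :
    (Matrix.diagonal t - Wᵀ * W).PosDef := by
  rw [Matrix.mul_assoc (diagonal q) Wᵀ W] at hM
  have hconj : diagonal q * (Wᵀ * W) * (diagonal q)⁻¹ = Wᵀ * W := by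
    refine IsSymm.diagonal_mul_mul_inv_diagonal_eq_self ?_ hq ?_
    · simp [IsSymm, transpose_mul]
    · have hsymm := (isSymm_diagonal t).sub hMsymm
      rwa [hM, sub_sub_cancel] at hsymm
  rw [← hconj, ← hM]
  refine (isHermitian_iff_isSymm.mpr hMsymm).posDef_of_sum_row_lt_diag fun i => ?_
  simpa [abs_of_pos (hMdiag i)] using hMdd i

/-- If `T = diag(t) ≻ 0` and there is a positive diagonal `Q = diag(q)`
such that `M = T − Q Wᵀ W Q⁻¹` is symmetric with positive diagonal entries and
strictly diagonally dominant, then `T − Wᵀ W ≻ 0`. -/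
theorem diagonally_dominant_similarity_implies_posdef
    (n m : ℕ) (t : Fin n → ℝ) (ht : ∀ i, 0 < t i)
    (W : Matrix (Fin m) (Fin n) ℝ)
    (q : Fin n → ℝ) (hq : ∀ i, 0 < q i)
    (M : Matrix (Fin n) (Fin n) ℝ)
    (hM : M = Matrix.diagonal t -
      Matrix.diagonal q * Wᵀ * W * (Matrix.diagonal q)⁻¹)
    (hMsymm : M.IsSymm)
    (hMdiag : ∀ i, 0 < M i i)
    (hMdd : ∀ i, ∑ j ∈ Finset.univ.erase i, |M i j| < |M i i|) :
    (Matrix.diagonal t - Wᵀ * W).PosDef :=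
  diagonally_dominant_similarity_implies_posdef_general n m t W q hq M hM hMsymm hMdiag hMdd
end

section
/- Let F1 ∈ ℝ^{n1×n1} be symmetric positive definite, let C1 ∈ ℝ^{c×n1}, let ε > 0, δ ∈ ℝ^c, and q ∈ ℝ^c with positive entries. Define γ ∈ ℝ^c by γ_i = ε + δ_i² + (1/2) Σ_{j=1}^{c} |(C1 F1⁻¹ C1ᵀ)_{ij}| · q_j / q_i and set Γ = diag(γ). Then the matrix 2Γ − C1 F1⁻¹ C1ᵀ is positive definite. -/
open Matrix Finset

/-!
Write `S = C1 F1⁻¹ C1ᵀ`, a symmetric matrix, and `r i = ∑ j, |S i j| q j / q i`. Then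
`2Γ - S = diag(2ε + 2δ²) + (diag r - S)`, a positive diagonal matrix plus a positive
semidefinite one: `diag r - S` is diagonally dominant after the scaling `diag q`, and its
quadratic form is nonnegative by the weighted AM-GM inequality
`2 |x i| |x j| ≤ (q j / q i) x i ^ 2 + (q i / q j) x j ^ 2` and the symmetry of `|S|`.
-/

lemma two_mul_le_add_weighted_sq (a b : ℝ) {s t : ℝ} (hs : 0 < s) (ht : 0 < t) :
    2 * a * b ≤ t / s * a ^ 2 + s / t * b ^ 2 := by
  rw [div_mul_eq_mul_div, div_mul_eq_mul_div, div_add_div _ _ hs.ne' ht.ne',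
    le_div_iff₀ (mul_pos hs ht)]
  nlinarith [sq_nonneg (a * t - b * s)]

variable {ι : Type*} [Fintype ι]

lemma Matrix.IsHermitian.quadForm_le_weighted_absRowSum {S : Matrix ι ι ℝ} (hS : S.IsHermitian)
    {q : ι → ℝ} (hq : ∀ i, 0 < q i) (x : ι → ℝ) :
    ∑ i, ∑ j, x i * S i j * x j ≤ ∑ i, (∑ j, |S i j| * q j / q i) * x i ^ 2 := by
  set w : ι → ι → ℝ := fun i j => |S i j| * q j / q i * x i ^ 2
  have term : ∀ i j, 2 * (x i * S i j * x j) ≤ w i j + w j i := fun i j =>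
    calc 2 * (x i * S i j * x j) ≤ 2 * |x i * S i j * x j| := by gcongr; exact le_abs_self _
      _ = |S i j| * (2 * |x i| * |x j|) := by rw [abs_mul, abs_mul]; ring
      _ ≤ |S i j| * (q j / q i * |x i| ^ 2 + q i / q j * |x j| ^ 2) :=
          mul_le_mul_of_nonneg_left (two_mul_le_add_weighted_sq _ _ (hq i) (hq j)) (abs_nonneg _)
      _ = w i j + w j i := by
          simp only [w, sq_abs, ← hS.apply i j, star_trivial]; ring
  have hsum := Finset.sum_le_sum fun i (_ : i ∈ univ) =>
    Finset.sum_le_sum fun j (_ : j ∈ univ) => term i j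
  simp only [← Finset.mul_sum, Finset.sum_add_distrib] at hsum
  rw [Finset.sum_comm (f := fun i j => w j i)] at hsum
  simp only [Finset.sum_mul]
  linarith

lemma Matrix.IsHermitian.posSemidef_diagonal_weighted_absRowSum_sub [DecidableEq ι]
    {S : Matrix ι ι ℝ} (hS : S.IsHermitian) {q : ι → ℝ} (hq : ∀ i, 0 < q i) :
    (diagonal (fun i => ∑ j, |S i j| * q j / q i) - S).PosSemidef := by
  refine .of_dotProduct_mulVec_nonneg ((isHermitian_diagonal _).sub hS) fun x => ?_
  have hquad : star x ⬝ᵥ (diagonal (fun i => ∑ j, |S i j| * q j / q i) - S) *ᵥ x =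
      ∑ i, (∑ j, |S i j| * q j / q i) * x i ^ 2 - ∑ i, ∑ j, x i * S i j * x j := by
    rw [star_trivial, sub_mulVec, dotProduct_sub]
    congr 1
    · simp only [dotProduct, mulVec_diagonal]
      exact Finset.sum_congr rfl fun i _ => by ring
    · simp only [dotProduct, mulVec, Finset.mul_sum, mul_assoc]
  rw [hquad, sub_nonneg]
  exact hS.quadForm_le_weighted_absRowSum hq x

/-- With `γ_i = ε + δ_i² + (1/2) Σ_j |(C1 F1⁻¹ C1ᵀ)_{ij}| q_j / q_i`
and `Γ = diag(γ)`, the matrix `2Γ − C1 F1⁻¹ C1ᵀ` is positive definite. -/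
theorem gamma_parameterization_posdef
    (n1 c : ℕ) (F1 : Matrix (Fin n1) (Fin n1) ℝ) (hF1 : F1.PosDef)
    (C1 : Matrix (Fin c) (Fin n1) ℝ) (ε : ℝ) (hε : 0 < ε)
    (δ q : Fin c → ℝ) (hq : ∀ i, 0 < q i)
    (γ : Fin c → ℝ)
    (hγ : ∀ i, γ i = ε + δ i ^ 2 +
      (1 / 2) * ∑ j, |(C1 * F1⁻¹ * C1ᵀ) i j| * q j / q i) :
    ((2 : ℝ) • Matrix.diagonal γ - C1 * F1⁻¹ * C1ᵀ).PosDef := by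
  set S := C1 * F1⁻¹ * C1ᵀ
  have hS : S.IsHermitian := by
    simpa using isHermitian_mul_mul_conjTranspose C1 hF1.isHermitian.inv
  have hsplit : (2 : ℝ) • diagonal γ - S =
      diagonal (fun i => 2 * (ε + δ i ^ 2)) +
        (diagonal (fun i => ∑ j, |S i j| * q j / q i) - S) := by
    rw [← add_sub_assoc, diagonal_add, ← diagonal_smul]
    congr 2
    funext i
    simp only [Pi.smul_apply, smul_eq_mul, hγ i]
    ring
  rw [hsplit]
  exact (posDef_diagonal_iff.mpr fun i => by positivity).add_posSemidef
    (hS.posSemidef_diagonal_weighted_absRowSum_sub hq)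
end

section
/- Let F = [[F1, F12], [F12ᵀ, F2]] ∈ ℝ^{(n1+m)×(n1+m)} be symmetric positive definite with F1 ∈ ℝ^{n1×n1}, F12 ∈ ℝ^{n1×m}, F2 ∈ ℝ^{m×m}. Let C1 ∈ ℝ^{c×n1}, ε > 0, δ ∈ ℝ^c, q ∈ ℝ^c with positive entries, and define γ_i = ε + δ_i² + (1/2) Σ_j |(C1 F1⁻¹ C1ᵀ)_{ij}| q_j / q_i, Γ = diag(γ). Let L_Γ ∈ ℝ^{c×c} satisfy L_Γᵀ L_Γ = 2Γ − C1 F1⁻¹ C1ᵀ, and let L_F ∈ ℝ^{m×m} be invertible with L_Fᵀ L_F = F2 − F12ᵀ F1⁻¹ F12. Let Y ∈ ℝ^{c×c}, Z ∈ ℝ^{m×c}, let (U, V) be the Cayley transform of (Y, Z), and set Ĉ2 = C1 F1⁻¹ F12 − L_Γᵀ Vᵀ L_F, Λ = Γ⁻¹, L = U L_Γ Γ⁻¹, X = Lᵀ L. Then the block matrix [[F1, F12, −C1ᵀ Λ], [F12ᵀ, F2, −Ĉ2ᵀ Λ], [−Λ C1, −Λ Ĉ2, 2Λ − X]] is positive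 semidefinite. -/
/-!
Take the Schur complement of the LMI with respect to the positive definite block `F1`. Using
`L_Fᵀ L_F = F2 − F12ᵀ F1⁻¹ F12` and `C1 F1⁻¹ C1ᵀ = 2Γ − L_Γᵀ L_Γ`, together with `Λ Γ Λ = Λ` and
the orthogonality `Uᵀ U + Vᵀ V = I` of the Cayley transform, the complement is exactly the Gram
matrix of the columns `[L_F, V L_Γ Λ]`, hence positive semidefinite.
-/

open Matrix

namespace Matrix

variable {l m n p : Type*}

theorem fromBlocks_fromBlocks_submatrix_sumAssoc {α : Type*} (A : Matrix l l α)
    (B : Matrix l m α) (C : Matrix m l α) (D : Matrix m m α) (E : Matrix l n α)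
    (G : Matrix m n α) (E' : Matrix n l α) (G' : Matrix n m α) (H : Matrix n n α) :
    (fromBlocks (fromBlocks A B C D) (fromRows E G) (fromCols E' G') H).submatrix
        (Equiv.sumAssoc l m n).symm (Equiv.sumAssoc l m n).symm =
      fromBlocks A (fromCols B E) (fromRows C E') (fromBlocks D G G' H) := by
  ext (i | j | k) (i | j | k) <;> rfl

variable [Fintype l] [Fintype m] [Fintype n] [Fintype p]

-- For singular `A` both sides are the junk value `A⁻¹ = 0`.
theorem nonsing_inv_mul_mul_nonsing_inv [DecidableEq n] (A : Matrix n n ℝ) :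
    A⁻¹ * A * A⁻¹ = A⁻¹ := by
  rcases nonsing_inv_cancel_or_zero A with ⟨h, -⟩ | h
  · rw [h, Matrix.one_mul]
  · rw [h, Matrix.zero_mul, Matrix.zero_mul]

theorem posSemidef_transpose_mul_self (A : Matrix m n ℝ) : (Aᵀ * A).PosSemidef := by
  simpa using posSemidef_conjTranspose_mul_self A

theorem posSemidef_fromBlocks_transpose_mul (A : Matrix l m ℝ) (B : Matrix l n ℝ) :
    (fromBlocks (Aᵀ * A) (Aᵀ * B) (Aᵀ * B)ᵀ (Bᵀ * B)).PosSemidef := by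
  simpa [transpose_fromCols, fromRows_mul_fromCols] using
    posSemidef_transpose_mul_self (fromCols A B)

theorem posSemidef_fromBlocks_fromBlocks_iff [DecidableEq l] {A : Matrix l l ℝ} (hA : A.PosDef)
    (B : Matrix l m ℝ) (D : Matrix m m ℝ) (E : Matrix l n ℝ) (G : Matrix m n ℝ)
    (H : Matrix n n ℝ) :
    (fromBlocks (fromBlocks A B Bᵀ D) (fromRows E G) (fromRows E G)ᵀ H).PosSemidef ↔
      (fromBlocks (D - Bᵀ * A⁻¹ * B) (G - Bᵀ * A⁻¹ * E) (G - Bᵀ * A⁻¹ * E)ᵀ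
        (H - Eᵀ * A⁻¹ * E)).PosSemidef := by
  have : Invertible A := hA.isUnit.invertible
  have hAinv : A⁻¹ᵀ = A⁻¹ := by simpa using hA.inv.isHermitian.eq
  have hlower : Gᵀ - Eᵀ * A⁻¹ * B = (G - Bᵀ * A⁻¹ * E)ᵀ := by
    rw [transpose_sub, transpose_mul, transpose_mul, hAinv, transpose_transpose, Matrix.mul_assoc]
  rw [← posSemidef_submatrix_equiv (Equiv.sumAssoc l m n).symm, transpose_fromRows,
    fromBlocks_fromBlocks_submatrix_sumAssoc, ← transpose_fromCols,
    ← conjTranspose_eq_transpose_of_trivial, hA.fromBlocks₁₁, conjTranspose_eq_transpose_of_trivial,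
    transpose_fromCols, fromRows_mul, fromRows_mul_fromCols, sub_eq_add_neg, fromBlocks_neg,
    fromBlocks_add, ← sub_eq_add_neg, ← sub_eq_add_neg, ← sub_eq_add_neg, ← sub_eq_add_neg, hlower]

theorem isUnit_det_of_posDef_add_transpose [DecidableEq n] {A : Matrix n n ℝ}
    (hA : (A + Aᵀ).PosDef) : IsUnit A.det := by
  rw [isUnit_iff_ne_zero]
  intro hdet
  obtain ⟨v, hv, hAv⟩ := exists_mulVec_eq_zero_iff.2 hdet
  have := hA.dotProduct_mulVec_pos hv
  rw [star_trivial, add_mulVec, dotProduct_add, mulVec_transpose, dotProduct_comm v (v ᵥ* A),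
    ← dotProduct_mulVec, hAv] at this
  simp at this

theorem isUnit_det_one_add_of_posSemidef_add_transpose [DecidableEq n] {M : Matrix n n ℝ}
    (hM : (M + Mᵀ).PosSemidef) : IsUnit (1 + M).det := by
  refine isUnit_det_of_posDef_add_transpose ?_
  rw [transpose_add, transpose_one, add_add_add_comm, ← two_smul ℝ]
  exact (PosDef.one.smul two_pos).add_posSemidef hM

theorem cayley_transpose_mul_add [DecidableEq n] (Z : Matrix m n ℝ) {M : Matrix n n ℝ}
    (hM : M + Mᵀ = (2 : ℝ) • (Zᵀ * Z)) :
    ((1 + M)⁻¹ * (1 - M))ᵀ * ((1 + M)⁻¹ * (1 - M)) +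
      ((2 : ℝ) • (Z * (1 + M)⁻¹))ᵀ * ((2 : ℝ) • (Z * (1 + M)⁻¹)) = 1 := by
  have hunit := isUnit_det_one_add_of_posSemidef_add_transpose
    (hM ▸ (posSemidef_transpose_mul_self Z).smul zero_le_two)
  set B := (1 + M)⁻¹
  have hBA : B * (1 + M) = 1 := nonsing_inv_mul _ hunit
  have hAB : (1 + M) * B = 1 := mul_nonsing_inv _ hunit
  have hcomm : B * (1 - M) = (1 - M) * B := calc
    B * (1 - M) = B * ((1 - M) * (1 + M)) * B := by
      rw [Matrix.mul_assoc, Matrix.mul_assoc, hAB, Matrix.mul_one]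
    _ = B * ((1 + M) * (1 - M)) * B := by noncomm_ring
    _ = (1 - M) * B := by rw [← Matrix.mul_assoc, hBA, Matrix.one_mul]
  have hZ : ((2 : ℝ) • (Z * B))ᵀ * ((2 : ℝ) • (Z * B)) = Bᵀ * ((2 : ℝ) • (M + Mᵀ)) * B := by
    rw [hM, smul_smul]
    simp only [transpose_smul, transpose_mul, Matrix.smul_mul, Matrix.mul_smul, smul_smul,
      Matrix.mul_assoc]
  calc _ = Bᵀ * ((1 - M)ᵀ * (1 - M) + (2 : ℝ) • (M + Mᵀ)) * B := by
        rw [hcomm, hZ, transpose_mul]; noncomm_ring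
    _ = ((1 + M) * B)ᵀ * ((1 + M) * B) := by
        rw [two_smul, transpose_mul, transpose_sub, transpose_one, transpose_add, transpose_one]
        noncomm_ring
    _ = 1 := by rw [hAB, transpose_one, Matrix.one_mul]

theorem two_smul_sub_sub_eq_transpose_mul_self [DecidableEq m] {Γ Λ : Matrix n n ℝ}
    (hΛ : Λᵀ = Λ) (hΛΓΛ : Λ * Γ * Λ = Λ) {U : Matrix l m ℝ} {V : Matrix p m ℝ}
    (hUV : Uᵀ * U + Vᵀ * V = 1) (L : Matrix m n ℝ) :
    (2 : ℝ) • Λ - (U * L * Λ)ᵀ * (U * L * Λ) - Λ * ((2 : ℝ) • Γ - Lᵀ * L) * Λ =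
      (V * L * Λ)ᵀ * (V * L * Λ) := by
  have hVV : (V * L * Λ)ᵀ * (V * L * Λ) = Λ * Lᵀ * (1 - Uᵀ * U) * L * Λ := by
    rw [← eq_sub_of_add_eq' hUV]
    simp only [transpose_mul, hΛ, Matrix.mul_assoc]
  rw [hVV, Matrix.mul_sub, Matrix.sub_mul, Matrix.mul_smul, Matrix.smul_mul, hΛΓΛ]
  simp only [transpose_mul, hΛ, Matrix.mul_sub, Matrix.sub_mul, Matrix.mul_one, Matrix.mul_assoc]
  abel

end Matrix
theorem conv2d_parameterization_satisfies_LMI_general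
    (n1 m c : ℕ)
    (F1 : Matrix (Fin n1) (Fin n1) ℝ) (F12 : Matrix (Fin n1) (Fin m) ℝ)
    (F2 : Matrix (Fin m) (Fin m) ℝ)
    (hF : (Matrix.fromBlocks F1 F12 F12ᵀ F2).PosDef)
    (C1 : Matrix (Fin c) (Fin n1) ℝ)
    (γ : Fin c → ℝ)
    (Γ : Matrix (Fin c) (Fin c) ℝ) (hΓ : Γ = Matrix.diagonal γ)
    (LΓ : Matrix (Fin c) (Fin c) ℝ)
    (hLΓ : LΓᵀ * LΓ = (2 : ℝ) • Γ - C1 * F1⁻¹ * C1ᵀ)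
    (LF : Matrix (Fin m) (Fin m) ℝ)
    (hLFF : LFᵀ * LF = F2 - F12ᵀ * F1⁻¹ * F12)
    (Y : Matrix (Fin c) (Fin c) ℝ) (Z : Matrix (Fin m) (Fin c) ℝ)
    (M : Matrix (Fin c) (Fin c) ℝ) (hM : M = Y - Yᵀ + Zᵀ * Z)
    (U : Matrix (Fin c) (Fin c) ℝ) (hU : U = (1 + M)⁻¹ * (1 - M))
    (V : Matrix (Fin m) (Fin c) ℝ) (hV : V = (2 : ℝ) • (Z * (1 + M)⁻¹))
    (Ch2 : Matrix (Fin c) (Fin m) ℝ)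
    (hCh2 : Ch2 = C1 * F1⁻¹ * F12 - LΓᵀ * Vᵀ * LF)
    (Λ : Matrix (Fin c) (Fin c) ℝ) (hΛ : Λ = Γ⁻¹)
    (L : Matrix (Fin c) (Fin c) ℝ) (hL : L = U * LΓ * Γ⁻¹)
    (X : Matrix (Fin c) (Fin c) ℝ) (hX : X = Lᵀ * L) :
    (Matrix.fromBlocks (Matrix.fromBlocks F1 F12 F12ᵀ F2)
      (Matrix.fromRows (-(C1ᵀ * Λ)) (-(Ch2ᵀ * Λ)))
      (Matrix.fromCols (-(Λ * C1)) (-(Λ * Ch2)))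
      ((2 : ℝ) • Λ - X)).PosSemidef := by
  have hF1 : F1.PosDef := hF.submatrix Sum.inl_injective
  have hF1inv : F1⁻¹ᵀ = F1⁻¹ := by simpa using hF1.inv.isHermitian.eq
  have hΛsymm : Λᵀ = Λ := by rw [hΛ, hΓ, transpose_nonsing_inv, diagonal_transpose]
  have hΛΓΛ : Λ * Γ * Λ = Λ := hΛ ▸ nonsing_inv_mul_mul_nonsing_inv Γ
  have hMZ : M + Mᵀ = (2 : ℝ) • (Zᵀ * Z) := by
    rw [hM, two_smul]
    simp only [transpose_add, transpose_sub, transpose_mul, transpose_transpose]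
    abel
  have hUV : Uᵀ * U + Vᵀ * V = 1 := hU ▸ hV ▸ cayley_transpose_mul_add Z hMZ
  have hlower : fromCols (-(Λ * C1)) (-(Λ * Ch2)) = (fromRows (-(C1ᵀ * Λ)) (-(Ch2ᵀ * Λ)))ᵀ := by
    simp [transpose_fromRows, hΛsymm]
  rw [hlower, posSemidef_fromBlocks_fromBlocks_iff hF1, ← hLFF]
  have h12 : -(Ch2ᵀ * Λ) - F12ᵀ * F1⁻¹ * -(C1ᵀ * Λ) = LFᵀ * (V * LΓ * Λ) := by
    rw [hCh2]
    simp only [transpose_sub, transpose_mul, transpose_transpose, hF1inv, Matrix.mul_neg,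
      Matrix.sub_mul, Matrix.mul_assoc]
    abel
  have h22 : (2 : ℝ) • Λ - X - (-(C1ᵀ * Λ))ᵀ * F1⁻¹ * -(C1ᵀ * Λ) =
      (V * LΓ * Λ)ᵀ * (V * LΓ * Λ) := by
    have hC : C1 * F1⁻¹ * C1ᵀ = (2 : ℝ) • Γ - LΓᵀ * LΓ := by rw [hLΓ, sub_sub_cancel]
    calc _ = (2 : ℝ) • Λ - X - Λ * (C1 * F1⁻¹ * C1ᵀ) * Λ := by
          simp only [transpose_neg, transpose_mul, transpose_transpose, hΛsymm, Matrix.neg_mul,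
            Matrix.mul_neg, neg_neg, Matrix.mul_assoc]
      _ = _ := by
          rw [hC, hX, hL, ← hΛ]
          exact two_smul_sub_sub_eq_transpose_mul_self hΛsymm hΛΓΛ hUV LΓ
  rw [h12, h22]
  exact posSemidef_fromBlocks_transpose_mul LF (V * LΓ * Λ)

/-- Parameterization of a 2-D convolutional layer
(Theorem 7 in the paper): with `Ĉ2 = C1 F1⁻¹ F12 − L_Γᵀ Vᵀ L_F`,
`Λ = Γ⁻¹`, `L = U L_Γ Γ⁻¹`, `X = Lᵀ L`, the 3×3 block LMI certificate
`[[F1, F12, −C1ᵀ Λ], [F12ᵀ, F2, −Ĉ2ᵀ Λ], [−Λ C1, −Λ Ĉ2, 2Λ − X]]`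
is positive semidefinite. -/
theorem conv2d_parameterization_satisfies_LMI
    (n1 m c : ℕ)
    (F1 : Matrix (Fin n1) (Fin n1) ℝ) (F12 : Matrix (Fin n1) (Fin m) ℝ)
    (F2 : Matrix (Fin m) (Fin m) ℝ)
    (hF : (Matrix.fromBlocks F1 F12 F12ᵀ F2).PosDef)
    (C1 : Matrix (Fin c) (Fin n1) ℝ) (ε : ℝ) (hε : 0 < ε)
    (δ q : Fin c → ℝ) (hq : ∀ i, 0 < q i)
    (γ : Fin c → ℝ)
    (hγ : ∀ i, γ i = ε + δ i ^ 2 +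
      (1 / 2) * ∑ j, |(C1 * F1⁻¹ * C1ᵀ) i j| * q j / q i)
    (Γ : Matrix (Fin c) (Fin c) ℝ) (hΓ : Γ = Matrix.diagonal γ)
    (LΓ : Matrix (Fin c) (Fin c) ℝ)
    (hLΓ : LΓᵀ * LΓ = (2 : ℝ) • Γ - C1 * F1⁻¹ * C1ᵀ)
    (LF : Matrix (Fin m) (Fin m) ℝ) (hLF : IsUnit LF)
    (hLFF : LFᵀ * LF = F2 - F12ᵀ * F1⁻¹ * F12)
    (Y : Matrix (Fin c) (Fin c) ℝ) (Z : Matrix (Fin m) (Fin c) ℝ)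
    (M : Matrix (Fin c) (Fin c) ℝ) (hM : M = Y - Yᵀ + Zᵀ * Z)
    (U : Matrix (Fin c) (Fin c) ℝ) (hU : U = (1 + M)⁻¹ * (1 - M))
    (V : Matrix (Fin m) (Fin c) ℝ) (hV : V = (2 : ℝ) • (Z * (1 + M)⁻¹))
    (Ch2 : Matrix (Fin c) (Fin m) ℝ)
    (hCh2 : Ch2 = C1 * F1⁻¹ * F12 - LΓᵀ * Vᵀ * LF)
    (Λ : Matrix (Fin c) (Fin c) ℝ) (hΛ : Λ = Γ⁻¹)
    (L : Matrix (Fin c) (Fin c) ℝ) (hL : L = U * LΓ * Γ⁻¹)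
    (X : Matrix (Fin c) (Fin c) ℝ) (hX : X = Lᵀ * L) :
    (Matrix.fromBlocks (Matrix.fromBlocks F1 F12 F12ᵀ F2)
      (Matrix.fromRows (-(C1ᵀ * Λ)) (-(Ch2ᵀ * Λ)))
      (Matrix.fromCols (-(Λ * C1)) (-(Λ * Ch2)))
      ((2 : ℝ) • Λ - X)).PosSemidef :=
  conv2d_parameterization_satisfies_LMI_general n1 m c F1 F12 F2 hF C1 γ Γ hΓ LΓ hLΓ LF hLFF Y Z M
    hM U hU V hV Ch2 hCh2 Λ hΛ L hL X hX
end

section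
/- Let σ : ℝ → ℝ be slope-restricted on [0,1]. Let A ∈ ℝ^{n×n}, B ∈ ℝ^{n×c₋}, C ∈ ℝ^{c×n}, D ∈ ℝ^{c×c₋}, b ∈ ℝ^c. Let P ∈ ℝ^{n×n} be symmetric positive definite, let X₋ ∈ ℝ^{c₋×c₋} and X ∈ ℝ^{c×c} be symmetric positive definite, and let Λ ∈ ℝ^{c×c} be diagonal with positive diagonal entries. Suppose the block matrix [[P − Aᵀ P A, −Aᵀ P B, −Cᵀ Λ], [−Bᵀ P A, X₋ − Bᵀ P B, −Dᵀ Λ], [−Λ C, −Λ D, 2Λ − X]] is positive semidefinite. For any two input sequences u^a, u^b : ℕ → ℝ^{c₋}, define the corresponding state sequences by x^a[0] = x^b[0] = 0 and x[i+1] = A x[i] + B u[i], and outputs y[i] = σ(C x[i] + D u[i] + b) (σ applied entrywise). Then for every N ∈ ℕ, Σ_{i=0}^{N−1} (y^a[i] − y^b[i])ᵀ X (y^a[i] − y^b[i]) ≤ Σ_{i=0}^{N−1} (u^a[i] − u^b[i])ᵀ X₋ (u^a[i] − u^b[i]). -/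
/-!
With `V x = xᵀ P x` as storage function, evaluating the LMI at the increments `(Δx, Δu, Δy)` of
two trajectories gives the one-step dissipation inequality
`V(Δx⁺) - V(Δx) ≤ Δuᵀ X₋ Δu - Δyᵀ X Δy - 2 Δyᵀ Λ (C Δx + D Δu - Δy)`, and the last term is
nonnegative because `σ` is slope-restricted and `Λ` is a nonnegative diagonal multiplier.
Summing over `i < N` telescopes `V`, which starts at `0` and stays nonnegative.
-/

open Matrix Finset

section CommRing

variable {R : Type*} [CommRing R] {n m o : Type*} [Fintype n] [Fintype m] [Fintype o]

theorem dotProduct_transpose_mul_mulVec {p : Type*} [Fintype p] (E : Matrix n m R)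
    (M : Matrix n p R) (u : m → R) (w : p → R) :
    u ⬝ᵥ (Eᵀ * M) *ᵥ w = (E *ᵥ u) ⬝ᵥ M *ᵥ w := by
  rw [← mulVec_mulVec, dotProduct_transpose_mulVec, dotProduct_comm]

def convLMIMatrix (A : Matrix n n R) (B : Matrix n m R) (C : Matrix o n R) (D : Matrix o m R)
    (P : Matrix n n R) (Xm : Matrix m m R) (X Λ : Matrix o o R) :
    Matrix ((n ⊕ m) ⊕ o) ((n ⊕ m) ⊕ o) R :=
  fromBlocks
    (fromBlocks (P - Aᵀ * P * A) (-(Aᵀ * P * B)) (-(Bᵀ * P * A)) (Xm - Bᵀ * P * B))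
    (fromRows (-(Cᵀ * Λ)) (-(Dᵀ * Λ)))
    (fromCols (-(Λ * C)) (-(Λ * D)))
    ((2 : R) • Λ - X)

theorem dotProduct_convLMIMatrix_mulVec (A : Matrix n n R) (B : Matrix n m R) (C : Matrix o n R)
    (D : Matrix o m R) {P : Matrix n n R} (hP : Pᵀ = P) (Xm : Matrix m m R)
    (X : Matrix o o R) {Λ : Matrix o o R} (hΛ : Λᵀ = Λ) (x : n → R) (u : m → R) (y : o → R) :
    Sum.elim (Sum.elim x u) y ⬝ᵥ convLMIMatrix A B C D P Xm X Λ *ᵥ Sum.elim (Sum.elim x u) y =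
      x ⬝ᵥ P *ᵥ x - (A *ᵥ x + B *ᵥ u) ⬝ᵥ P *ᵥ (A *ᵥ x + B *ᵥ u) + u ⬝ᵥ Xm *ᵥ u
        - y ⬝ᵥ X *ᵥ y - 2 * (y ⬝ᵥ Λ *ᵥ (C *ᵥ x + D *ᵥ u - y)) := by
  have hPsymm := hP ▸ dotProduct_transpose_mulVec P (A *ᵥ x) (B *ᵥ u)
  have hΛsymm (z : o → R) := hΛ ▸ dotProduct_transpose_mulVec Λ y z
  simp only [convLMIMatrix, fromBlocks_mulVec, fromRows_mulVec, fromCols_mulVec_sumElim,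
    sumElim_dotProduct_sumElim, Sum.elim_comp_inl, Sum.elim_comp_inr, sub_mulVec, neg_mulVec,
    smul_mulVec, dotProduct_add, dotProduct_sub, dotProduct_neg, dotProduct_smul, smul_eq_mul]
  -- transposes are moved across the dot product before products are split into `mulVec`s
  simp only [Matrix.mul_assoc, dotProduct_transpose_mul_mulVec]
  simp only [← mulVec_mulVec, mulVec_add, mulVec_sub, dotProduct_add, add_dotProduct,
    dotProduct_sub, hPsymm, hΛsymm (C *ᵥ x), hΛsymm (D *ᵥ u)]
  ring

end CommRing

theorem dotProduct_diagonal_mulVec_nonneg {R o : Type*} [CommRing R] [PartialOrder R]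
    [IsOrderedRing R] [Fintype o] [DecidableEq o] {d : o → R} (hd : ∀ j, 0 ≤ d j)
    {y z : o → R} (hyz : ∀ j, 0 ≤ y j * z j) : 0 ≤ y ⬝ᵥ diagonal d *ᵥ z := by
  refine sum_nonneg fun j _ => ?_
  rw [mulVec_diagonal, mul_left_comm]
  exact mul_nonneg (hd j) (hyz j)

theorem convLMIMatrix_dissipation_step {n m o : Type*} [Fintype n] [Fintype m] [Fintype o]
    [DecidableEq o] {A : Matrix n n ℝ} {B : Matrix n m ℝ} {C : Matrix o n ℝ}
    {D : Matrix o m ℝ} {P : Matrix n n ℝ} {Xm : Matrix m m ℝ} {X : Matrix o o ℝ} {d : o → ℝ}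
    (hLMI : (convLMIMatrix A B C D P Xm X (diagonal d)).PosSemidef) (hP : Pᵀ = P)
    (hd : ∀ j, 0 ≤ d j) {x : n → ℝ} {u : m → ℝ} {y : o → ℝ}
    (hslope : ∀ j, 0 ≤ y j * ((C *ᵥ x + D *ᵥ u) j - y j)) :
    y ⬝ᵥ X *ᵥ y + (A *ᵥ x + B *ᵥ u) ⬝ᵥ P *ᵥ (A *ᵥ x + B *ᵥ u) ≤
      u ⬝ᵥ Xm *ᵥ u + x ⬝ᵥ P *ᵥ x := by
  have hquad := hLMI.dotProduct_mulVec_nonneg (Sum.elim (Sum.elim x u) y)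
  rw [star_trivial, dotProduct_convLMIMatrix_mulVec A B C D hP Xm X (diagonal_transpose d)] at hquad
  have hmult := dotProduct_diagonal_mulVec_nonneg hd (z := C *ᵥ x + D *ᵥ u - y) hslope
  linarith

theorem sum_range_le_sum_range_of_storage {R : Type*} [AddCommGroup R] [PartialOrder R]
    [IsOrderedAddMonoid R] {s r V : ℕ → R} (hV0 : V 0 = 0) (hV : ∀ i, 0 ≤ V i)
    (hstep : ∀ i, s i + V (i + 1) ≤ r i + V i) (N : ℕ) :
    ∑ i ∈ range N, s i ≤ ∑ i ∈ range N, r i :=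
  calc ∑ i ∈ range N, s i
      ≤ ∑ i ∈ range N, (r i - (V (i + 1) - V i)) :=
        sum_le_sum fun i _ => le_sub_iff_add_le.mpr <| by
          simpa only [add_sub_assoc, sub_self, add_zero] using sub_le_sub_right (hstep i) (V i)
    _ = ∑ i ∈ range N, r i - V N := by rw [sum_sub_distrib, sum_range_sub, hV0, sub_zero]
    _ ≤ ∑ i ∈ range N, r i := sub_le_self _ (hV N)

theorem conv_state_space_LMI_implies_incremental_dissipativity_general
    (n cm c : ℕ) (σ : ℝ → ℝ)
    (hσ : ∀ a b : ℝ, 0 ≤ (σ a - σ b) * ((a - b) - (σ a - σ b)))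
    (A : Matrix (Fin n) (Fin n) ℝ) (B : Matrix (Fin n) (Fin cm) ℝ)
    (C : Matrix (Fin c) (Fin n) ℝ) (D : Matrix (Fin c) (Fin cm) ℝ)
    (b : Fin c → ℝ)
    (P : Matrix (Fin n) (Fin n) ℝ) (hP : P.PosDef)
    (Xm : Matrix (Fin cm) (Fin cm) ℝ)
    (X : Matrix (Fin c) (Fin c) ℝ)
    (d : Fin c → ℝ) (hd : ∀ i, 0 < d i)
    (Λ : Matrix (Fin c) (Fin c) ℝ) (hΛ : Λ = Matrix.diagonal d)
    (hLMI : (Matrix.fromBlocks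
      (Matrix.fromBlocks (P - Aᵀ * P * A) (-(Aᵀ * P * B))
        (-(Bᵀ * P * A)) (Xm - Bᵀ * P * B))
      (Matrix.fromRows (-(Cᵀ * Λ)) (-(Dᵀ * Λ)))
      (Matrix.fromCols (-(Λ * C)) (-(Λ * D)))
      ((2 : ℝ) • Λ - X)).PosSemidef)
    (ua ub : ℕ → Fin cm → ℝ)
    (xa xb : ℕ → Fin n → ℝ)
    (hxa0 : xa 0 = 0) (hxb0 : xb 0 = 0)
    (hxa : ∀ i, xa (i + 1) = A *ᵥ xa i + B *ᵥ ua i)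
    (hxb : ∀ i, xb (i + 1) = A *ᵥ xb i + B *ᵥ ub i)
    (ya yb : ℕ → Fin c → ℝ)
    (hya : ∀ i, ya i = fun j => σ ((C *ᵥ xa i + D *ᵥ ua i + b) j))
    (hyb : ∀ i, yb i = fun j => σ ((C *ᵥ xb i + D *ᵥ ub i + b) j)) :
    ∀ N : ℕ,
      ∑ i ∈ Finset.range N, (ya i - yb i) ⬝ᵥ X *ᵥ (ya i - yb i) ≤
        ∑ i ∈ Finset.range N, (ua i - ub i) ⬝ᵥ Xm *ᵥ (ua i - ub i) := by
  intro N
  subst hΛ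
  have hstate : ∀ i, xa (i + 1) - xb (i + 1) = A *ᵥ (xa i - xb i) + B *ᵥ (ua i - ub i) := by
    intro i
    rw [hxa, hxb, mulVec_sub, mulVec_sub]
    abel
  have hslope : ∀ i j, 0 ≤ (ya i - yb i) j *
      ((C *ᵥ (xa i - xb i) + D *ᵥ (ua i - ub i)) j - (ya i - yb i) j) := by
    intro i j
    have hbias : (C *ᵥ (xa i - xb i) + D *ᵥ (ua i - ub i)) j =
        (C *ᵥ xa i + D *ᵥ ua i + b) j - (C *ᵥ xb i + D *ᵥ ub i + b) j := by
      simp only [mulVec_sub, Pi.add_apply, Pi.sub_apply]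
      ring
    rw [hbias, hya, hyb]
    exact hσ _ _
  refine sum_range_le_sum_range_of_storage (V := fun i => (xa i - xb i) ⬝ᵥ P *ᵥ (xa i - xb i))
    (by simp [hxa0, hxb0])
    (fun i => by simpa only [star_trivial] using hP.posSemidef.dotProduct_mulVec_nonneg _)
    (fun i => ?_) N
  rw [hstate]
  exact convLMIMatrix_dissipation_step hLMI hP.isHermitian.eq (fun j => (hd j).le) (hslope i)

/-- The 3×3 block LMI certificate implies incremental
dissipativity (with supply given by input weight `X₋` and output weight `X`)
of a 1-D convolutional layer realized in state space
`x[i+1] = A x[i] + B u[i]`, `y[i] = σ(C x[i] + D u[i] + b)` (zero initial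
state, `σ` slope-restricted applied entrywise). -/
theorem conv_state_space_LMI_implies_incremental_dissipativity
    (n cm c : ℕ) (σ : ℝ → ℝ)
    (hσ : ∀ a b : ℝ, 0 ≤ (σ a - σ b) * ((a - b) - (σ a - σ b)))
    (A : Matrix (Fin n) (Fin n) ℝ) (B : Matrix (Fin n) (Fin cm) ℝ)
    (C : Matrix (Fin c) (Fin n) ℝ) (D : Matrix (Fin c) (Fin cm) ℝ)
    (b : Fin c → ℝ)
    (P : Matrix (Fin n) (Fin n) ℝ) (hP : P.PosDef)
    (Xm : Matrix (Fin cm) (Fin cm) ℝ) (hXm : Xm.PosDef)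
    (X : Matrix (Fin c) (Fin c) ℝ) (hX : X.PosDef)
    (d : Fin c → ℝ) (hd : ∀ i, 0 < d i)
    (Λ : Matrix (Fin c) (Fin c) ℝ) (hΛ : Λ = Matrix.diagonal d)
    (hLMI : (Matrix.fromBlocks
      (Matrix.fromBlocks (P - Aᵀ * P * A) (-(Aᵀ * P * B))
        (-(Bᵀ * P * A)) (Xm - Bᵀ * P * B))
      (Matrix.fromRows (-(Cᵀ * Λ)) (-(Dᵀ * Λ)))
      (Matrix.fromCols (-(Λ * C)) (-(Λ * D)))
      ((2 : ℝ) • Λ - X)).PosSemidef)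
    (ua ub : ℕ → Fin cm → ℝ)
    (xa xb : ℕ → Fin n → ℝ)
    (hxa0 : xa 0 = 0) (hxb0 : xb 0 = 0)
    (hxa : ∀ i, xa (i + 1) = A *ᵥ xa i + B *ᵥ ua i)
    (hxb : ∀ i, xb (i + 1) = A *ᵥ xb i + B *ᵥ ub i)
    (ya yb : ℕ → Fin c → ℝ)
    (hya : ∀ i, ya i = fun j => σ ((C *ᵥ xa i + D *ᵥ ua i + b) j))
    (hyb : ∀ i, yb i = fun j => σ ((C *ᵥ xb i + D *ᵥ ub i + b) j)) :
    ∀ N : ℕ,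
      ∑ i ∈ Finset.range N, (ya i - yb i) ⬝ᵥ X *ᵥ (ya i - yb i) ≤
        ∑ i ∈ Finset.range N, (ua i - ub i) ⬝ᵥ Xm *ᵥ (ua i - ub i) :=
  conv_state_space_LMI_implies_incremental_dissipativity_general n cm c σ hσ A B C D b P hP Xm X d
    hd Λ hΛ hLMI ua ub xa xb hxa0 hxb0 hxa hxb ya yb hya hyb
end

section
/- Let r1, r2 ≥ 1, c₋, c be positive integers, K[t1, t2] ∈ ℝ^{c×c₋} for 0 ≤ t1 ≤ r1, 0 ≤ t2 ≤ r2, and b ∈ ℝ^c. Define the Roesser realization matrices: A12 ∈ ℝ^{c r1 × c₋ r2} and B1 ∈ ℝ^{c r1 × c₋} with block rows indexed by t1 = r1, r1−1, …, 1 and block columns of A12 indexed by t2 = r2, r2−1, …, 1, where the (t1, t2) block of A12 is K[t1, t2] and the t1-th block of B1 is K[t1, 0]; C2 ∈ ℝ^{c × c₋ r2} with blocks K[0, r2], …, K[0, 1] and D = K[0, 0]; A11 ∈ ℝ^{c r1 × c r1} the block down-shift matrix [[0, 0], [I_{c(r1−1)}, 0]] and C1 = [0, I_c] ∈ ℝ^{c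 × c r1}; A21 = 0; and [A22, B2] = [[0, I_{c₋(r2−1)}, 0], [0, 0, I_{c₋}]], i.e., A22 ∈ ℝ^{c₋ r2 × c₋ r2} is the block up-shift matrix and B2 ∈ ℝ^{c₋ r2 × c₋} has its last block equal to I_{c₋} and all other blocks zero. For any input u : ℕ × ℕ → ℝ^{c₋}, extend it by ũ[i, j] = u[i, j] for i, j ≥ 0 and ũ[i, j] = 0 otherwise, and suppose x1 : ℕ × ℕ → ℝ^{c r1}, x2 : ℕ × ℕ → ℝ^{c₋ r2}, y : ℕ × ℕ → ℝ^c satisfy the Roesser recursion x1[i+1, j] = A11 x1[i, j] + A12 x2[i, j] + B1 u[i, j], x2[i, j+1] = A22 x2[i, j] + B2 u[i, j], y[i, j] = C1 x1[i, j] + C2 x2[i, j] + D u[i, j] + b, with boundary conditions x1[0, j] = 0 for all j and x2[i, 0] = 0 for all i. Then for all i, j ∈ ℕ, y[i, j] = b + Σ_{t1=0}^{r1} Σ_{t2=0}^{r2} K[t1, t2] ũ[i − t1, j − t2], i.e., the Roesser model realizes the 2-D convolution with kernel K, bias b, stride 1, and zero padding. -/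
/-!
The vertical state is a delay line: by induction on `j`, block `t` of `x2[i, j]` holds
`ũ[i, j + t - r2]`, so the readout `[K[k, r2], …, K[k, 1]] x2 + K[k, 0] u` is the 1-D
convolution of row `i` of `ũ` with row `k` of the kernel. The horizontal state is a delay
line fed by these row convolutions (block `s` with kernel row `r1 - s`), so its last block
holds the contributions of the kernel rows `1, …, r1` at the matching earlier image rows;
adding the row-`0` readout gives the full 2-D convolution.
-/

open Matrix Finset

lemma sum_fin_ite_val_eq {M : Type*} [AddCommMonoid M] {r : ℕ} (f : Fin r → M) (k : ℕ) :
    (∑ q : Fin r, if (q : ℕ) = k then f q else 0) = if h : k < r then f ⟨k, h⟩ else 0 := by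
  split_ifs with h
  · simp only [← Fin.ext_iff (b := ⟨k, h⟩), sum_ite_eq', mem_univ, if_true]
  · exact sum_eq_zero fun q _ => if_neg (by omega)

section

variable {R : Type*} [NonAssocSemiring R] {m n : Type*}

lemma sum_prod_ite_and_eq {κ : Type*} [Fintype κ] [Fintype m] [DecidableEq m]
    (P : κ → Prop) [DecidablePred P] (z : κ × m → R) (a : m) :
    ∑ q : κ × m, (if P q.1 ∧ a = q.2 then (1 : R) else 0) * z q =
      ∑ k, if P k then z (k, a) else 0 := by
  simp [Fintype.sum_prod_type, ite_and]

def blockShiftDown (r : ℕ) (m : Type*) [DecidableEq m] : Matrix (Fin r × m) (Fin r × m) R :=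
  of fun p q => if (p.1 : ℕ) = (q.1 : ℕ) + 1 ∧ p.2 = q.2 then 1 else 0

def blockShiftUp (r : ℕ) (n : Type*) [DecidableEq n] : Matrix (Fin r × n) (Fin r × n) R :=
  of fun p q => if (q.1 : ℕ) = (p.1 : ℕ) + 1 ∧ p.2 = q.2 then 1 else 0

def lastBlockInclusion (r : ℕ) (n : Type*) [DecidableEq n] : Matrix (Fin r × n) n R :=
  of fun p j => if (p.1 : ℕ) = r - 1 ∧ p.2 = j then 1 else 0

def lastBlockProjection (r : ℕ) (m : Type*) [DecidableEq m] : Matrix m (Fin r × m) R :=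
  of fun a p => if (p.1 : ℕ) = r - 1 ∧ a = p.2 then 1 else 0

def blockRow {ι : Type*} (M : ι → Matrix m n R) : Matrix m (ι × n) R :=
  of fun a p => M p.1 a p.2

lemma blockShiftDown_mulVec_apply {r : ℕ} [Fintype m] [DecidableEq m]
    (z : Fin r × m → R) (s : Fin r) (a : m) :
    (blockShiftDown r m *ᵥ z) (s, a) =
      if h : 0 < (s : ℕ) then z (⟨s - 1, by omega⟩, a) else 0 := by
  simp only [blockShiftDown, mulVec, dotProduct, of_apply]
  rw [sum_prod_ite_and_eq (fun q : Fin r => (s : ℕ) = q + 1)]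
  split_ifs with hs
  · simp_rw [show ∀ q : Fin r, (s : ℕ) = q + 1 ↔ (q : ℕ) = s - 1 by omega]
    rw [sum_fin_ite_val_eq, dif_pos (by omega)]
  · exact sum_eq_zero fun q _ => if_neg (by omega)

lemma blockShiftUp_mulVec_apply {r : ℕ} [Fintype n] [DecidableEq n]
    (z : Fin r × n → R) (t : Fin r) (a : n) :
    (blockShiftUp r n *ᵥ z) (t, a) =
      if h : (t : ℕ) + 1 < r then z (⟨t + 1, h⟩, a) else 0 := by
  simp only [blockShiftUp, mulVec, dotProduct, of_apply]
  rw [sum_prod_ite_and_eq (fun q : Fin r => (q : ℕ) = t + 1), sum_fin_ite_val_eq]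

lemma lastBlockInclusion_mulVec_apply {r : ℕ} [Fintype n] [DecidableEq n]
    (w : n → R) (t : Fin r) (a : n) :
    (lastBlockInclusion r n *ᵥ w) (t, a) = if (t : ℕ) = r - 1 then w a else 0 := by
  simp [lastBlockInclusion, mulVec, dotProduct, ite_and]

lemma lastBlockProjection_mulVec {r : ℕ} [Fintype m] [DecidableEq m] (hr : 1 ≤ r)
    (z : Fin r × m → R) :
    lastBlockProjection r m *ᵥ z = fun a => z (⟨r - 1, by omega⟩, a) := by
  ext a
  simp only [lastBlockProjection, mulVec, dotProduct, of_apply]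
  rw [sum_prod_ite_and_eq (fun q : Fin r => (q : ℕ) = r - 1), sum_fin_ite_val_eq,
    dif_pos (by omega)]

lemma blockRow_mulVec {ι : Type*} [Fintype ι] [Fintype n] (M : ι → Matrix m n R)
    (z : ι × n → R) : blockRow M *ᵥ z = ∑ q, M q *ᵥ fun a => z (q, a) := by
  ext a
  simp [blockRow, mulVec, dotProduct, Fintype.sum_prod_type, Finset.sum_apply]

lemma shiftUp_register_eq {r : ℕ} [Fintype n] [DecidableEq n]
    {x : ℕ → Fin r × n → R} {v : ℤ → n → R} (hv : ∀ j < 0, v j = 0) (h0 : x 0 = 0)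
    (hsucc : ∀ j : ℕ, x (j + 1) = blockShiftUp r n *ᵥ x j + lastBlockInclusion r n *ᵥ v j)
    (j : ℕ) (t : Fin r) (a : n) : x j (t, a) = v (j + t - r) a := by
  induction j generalizing t with
  | zero => rw [h0, hv _ (by omega), Pi.zero_apply, Pi.zero_apply]
  | succ j ih =>
    rw [hsucc, Pi.add_apply, blockShiftUp_mulVec_apply, lastBlockInclusion_mulVec_apply]
    split_ifs with hlt hlast hlast
    · omega
    · rw [ih, add_zero]; push_cast; ring_nf
    · rw [zero_add]; congr 2; omega
    · omega

lemma shiftDown_register_eq {r : ℕ} [Fintype m] [DecidableEq m]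
    {x : ℕ → Fin r × m → R} {F : ℕ → ℤ → m → R} (hF : ∀ k, ∀ i < 0, F k i = 0)
    (h0 : x 0 = 0)
    (hsucc : ∀ i : ℕ, x (i + 1) = blockShiftDown r m *ᵥ x i + fun p => F (r - p.1) i p.2)
    (i : ℕ) (s : Fin r) (a : m) :
    x i (s, a) = ∑ t ∈ range (s + 1), F (r - s + t) (i - 1 - t) a := by
  induction i generalizing s with
  | zero =>
    rw [h0]
    exact (sum_eq_zero fun t _ => by rw [hF _ _ (by omega), Pi.zero_apply]).symm
  | succ i ih =>
    rw [hsucc, Pi.add_apply, blockShiftDown_mulVec_apply, sum_range_succ']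
    split_ifs with hs
    · have hsr := s.isLt
      rw [ih, Fin.val_mk, Nat.sub_add_cancel hs]
      congr 1
      · refine sum_congr rfl fun t _ => ?_
        rw [show r - (s - 1) + t = r - s + (t + 1) by omega]
        push_cast; ring_nf
      · push_cast; ring_nf
    · simp [show (s : ℕ) = 0 by omega]

section ZeroExtend

variable {α : Type*} [Zero α] (u : ℕ → ℕ → α)

def zeroExtend (i j : ℤ) : α :=
  if 0 ≤ i ∧ 0 ≤ j then u i.toNat j.toNat else 0

@[simp]
lemma zeroExtend_natCast (i j : ℕ) : zeroExtend u i j = u i j := by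
  simp [zeroExtend]

lemma zeroExtend_of_neg_left {i : ℤ} (hi : i < 0) (j : ℤ) : zeroExtend u i j = 0 :=
  if_neg fun h => by omega

lemma zeroExtend_of_neg_right (i : ℤ) {j : ℤ} (hj : j < 0) : zeroExtend u i j = 0 :=
  if_neg fun h => by omega

end ZeroExtend

def rowConv [Fintype n] (K : ℕ → ℕ → Matrix m n R) (r : ℕ) (v : ℤ → ℤ → n → R)
    (k : ℕ) (i j : ℤ) : m → R :=
  ∑ t ∈ range (r + 1), K k t *ᵥ v i (j - t)

lemma rowConv_zeroExtend_of_neg [Fintype n] (K : ℕ → ℕ → Matrix m n R) (r : ℕ)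
    (u : ℕ → ℕ → n → R) (k : ℕ) {i : ℤ} (hi : i < 0) (j : ℤ) :
    rowConv K r (zeroExtend u) k i j = 0 := by
  simp [rowConv, zeroExtend_of_neg_left u hi]

lemma blockRow_mulVec_add_eq_rowConv [Fintype n] (K : ℕ → ℕ → Matrix m n R)
    (k : ℕ) {r : ℕ} {z : Fin r × n → R} {v : ℤ → ℤ → n → R} {i j : ℤ}
    (hz : ∀ t a, z (t, a) = v i (j + t - r) a) :
    blockRow (fun q : Fin r => K k (r - q)) *ᵥ z + K k 0 *ᵥ v i j = rowConv K r v k i j := by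
  rw [rowConv, sum_range_succ', Nat.cast_zero, sub_zero, blockRow_mulVec]
  congr 1
  simp_rw [hz]
  rw [Fin.sum_univ_eq_sum_range (fun q => K k (r - q) *ᵥ v i (j + q - r)),
    ← sum_range_reflect]
  refine sum_congr rfl fun t ht => ?_
  have htr := mem_range.mp ht
  rw [show r - (r - 1 - t) = t + 1 by omega, Nat.cast_sub (by omega), Nat.cast_sub (by omega)]
  push_cast; ring_nf

end

theorem conv2d_roesser_realization_general
    (r1 r2 cm c : ℕ) (hr1 : 1 ≤ r1)
    (K : ℕ → ℕ → Matrix (Fin c) (Fin cm) ℝ) (b : Fin c → ℝ)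
    (A11 : Matrix (Fin r1 × Fin c) (Fin r1 × Fin c) ℝ)
    (hA11 : A11 = Matrix.of fun p q =>
      if (p.1 : ℕ) = (q.1 : ℕ) + 1 ∧ p.2 = q.2 then (1 : ℝ) else 0)
    (A12 : Matrix (Fin r1 × Fin c) (Fin r2 × Fin cm) ℝ)
    (hA12 : A12 = Matrix.of fun p q => K (r1 - (p.1 : ℕ)) (r2 - (q.1 : ℕ)) p.2 q.2)
    (B1 : Matrix (Fin r1 × Fin c) (Fin cm) ℝ)
    (hB1 : B1 = Matrix.of fun p j => K (r1 - (p.1 : ℕ)) 0 p.2 j)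
    (C1 : Matrix (Fin c) (Fin r1 × Fin c) ℝ)
    (hC1 : C1 = Matrix.of fun a p =>
      if (p.1 : ℕ) = r1 - 1 ∧ a = p.2 then (1 : ℝ) else 0)
    (A22 : Matrix (Fin r2 × Fin cm) (Fin r2 × Fin cm) ℝ)
    (hA22 : A22 = Matrix.of fun p q =>
      if (q.1 : ℕ) = (p.1 : ℕ) + 1 ∧ p.2 = q.2 then (1 : ℝ) else 0)
    (B2 : Matrix (Fin r2 × Fin cm) (Fin cm) ℝ)
    (hB2 : B2 = Matrix.of fun p j =>
      if (p.1 : ℕ) = r2 - 1 ∧ p.2 = j then (1 : ℝ) else 0)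
    (C2 : Matrix (Fin c) (Fin r2 × Fin cm) ℝ)
    (hC2 : C2 = Matrix.of fun a p => K 0 (r2 - (p.1 : ℕ)) a p.2)
    (D : Matrix (Fin c) (Fin cm) ℝ) (hD : D = K 0 0)
    (u : ℕ → ℕ → Fin cm → ℝ)
    (ut : ℤ → ℤ → Fin cm → ℝ)
    (hut : ∀ i j : ℤ, ut i j = if 0 ≤ i ∧ 0 ≤ j then u i.toNat j.toNat else 0)
    (x1 : ℕ → ℕ → Fin r1 × Fin c → ℝ)
    (x2 : ℕ → ℕ → Fin r2 × Fin cm → ℝ)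
    (y : ℕ → ℕ → Fin c → ℝ)
    (hx10 : ∀ j, x1 0 j = 0) (hx20 : ∀ i, x2 i 0 = 0)
    (hx1 : ∀ i j, x1 (i + 1) j = A11 *ᵥ x1 i j + A12 *ᵥ x2 i j + B1 *ᵥ u i j)
    (hx2 : ∀ i j, x2 i (j + 1) = A22 *ᵥ x2 i j + B2 *ᵥ u i j)
    (hy : ∀ i j, y i j = C1 *ᵥ x1 i j + C2 *ᵥ x2 i j + D *ᵥ u i j + b) :
    ∀ i j : ℕ, y i j = b + ∑ t1 ∈ Finset.range (r1 + 1), ∑ t2 ∈ Finset.range (r2 + 1),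
      K t1 t2 *ᵥ ut ((i : ℤ) - (t1 : ℤ)) ((j : ℤ) - (t2 : ℤ)) := by
  obtain rfl : A11 = blockShiftDown r1 (Fin c) := hA11
  obtain rfl : A22 = blockShiftUp r2 (Fin cm) := hA22
  obtain rfl : B2 = lastBlockInclusion r2 (Fin cm) := hB2
  obtain rfl : C1 = lastBlockProjection r1 (Fin c) := hC1
  obtain rfl : C2 = blockRow fun q : Fin r2 => K 0 (r2 - q) := hC2
  obtain rfl : ut = zeroExtend u := funext₂ hut
  subst hA12 hB1 hD
  have hx2c (i j : ℕ) (t : Fin r2) (a : Fin cm) : x2 i j (t, a) = zeroExtend u i (j + t - r2) a :=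
    shiftUp_register_eq (fun j hj => zeroExtend_of_neg_right u i hj) (hx20 i)
      (fun j => by simpa using hx2 i j) j t a
  have hx1c (i j : ℕ) (s : Fin r1) (a : Fin c) :
      x1 i j (s, a) =
        ∑ t ∈ range (s + 1), rowConv K r2 (zeroExtend u) (r1 - s + t) (i - 1 - t) j a := by
    refine shiftDown_register_eq (x := fun i => x1 i j)
      (F := fun k i => rowConv K r2 (zeroExtend u) k i j)
      (fun k i hi => rowConv_zeroExtend_of_neg K r2 u k hi j) (hx10 j) (fun i => ?_) i s a
    rw [hx1, add_assoc, ← zeroExtend_natCast u i j]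
    congr 1
    ext ⟨s, a⟩
    exact congrFun (blockRow_mulVec_add_eq_rowConv K (r1 - s) (hx2c i j)) a
  intro i j
  rw [hy, add_assoc (_ *ᵥ x1 i j), ← zeroExtend_natCast u i j,
    blockRow_mulVec_add_eq_rowConv K 0 (hx2c i j), lastBlockProjection_mulVec hr1]
  change _ = b + ∑ t ∈ range (r1 + 1), rowConv K r2 (zeroExtend u) t (i - t) j
  rw [sum_range_succ', add_comm b, Nat.cast_zero, sub_zero]
  congr 2
  ext a
  rw [hx1c, Fin.val_mk, Nat.sub_add_cancel hr1, Finset.sum_apply]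
  refine sum_congr rfl fun t _ => ?_
  rw [show r1 - (r1 - 1) + t = t + 1 by omega]
  push_cast; ring_nf

/-- The Roesser 2-D state-space model built from the kernel `K`
(as in Lemma 1 of the paper) realizes the 2-D convolution
`y[i,j] = b + Σ_{t1=0}^{r1} Σ_{t2=0}^{r2} K[t1,t2] ũ[i−t1, j−t2]` with zero
padding. Horizontal state blocks are indexed by `Fin r1 × Fin c`, vertical
state blocks by `Fin r2 × Fin c₋`. -/
theorem conv2d_roesser_realization
    (r1 r2 cm c : ℕ) (hr1 : 1 ≤ r1) (hr2 : 1 ≤ r2) (hcm : 0 < cm) (hc : 0 < c)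
    (K : ℕ → ℕ → Matrix (Fin c) (Fin cm) ℝ) (b : Fin c → ℝ)
    (A11 : Matrix (Fin r1 × Fin c) (Fin r1 × Fin c) ℝ)
    (hA11 : A11 = Matrix.of fun p q =>
      if (p.1 : ℕ) = (q.1 : ℕ) + 1 ∧ p.2 = q.2 then (1 : ℝ) else 0)
    (A12 : Matrix (Fin r1 × Fin c) (Fin r2 × Fin cm) ℝ)
    (hA12 : A12 = Matrix.of fun p q => K (r1 - (p.1 : ℕ)) (r2 - (q.1 : ℕ)) p.2 q.2)
    (B1 : Matrix (Fin r1 × Fin c) (Fin cm) ℝ)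
    (hB1 : B1 = Matrix.of fun p j => K (r1 - (p.1 : ℕ)) 0 p.2 j)
    (C1 : Matrix (Fin c) (Fin r1 × Fin c) ℝ)
    (hC1 : C1 = Matrix.of fun a p =>
      if (p.1 : ℕ) = r1 - 1 ∧ a = p.2 then (1 : ℝ) else 0)
    (A22 : Matrix (Fin r2 × Fin cm) (Fin r2 × Fin cm) ℝ)
    (hA22 : A22 = Matrix.of fun p q =>
      if (q.1 : ℕ) = (p.1 : ℕ) + 1 ∧ p.2 = q.2 then (1 : ℝ) else 0)
    (B2 : Matrix (Fin r2 × Fin cm) (Fin cm) ℝ)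
    (hB2 : B2 = Matrix.of fun p j =>
      if (p.1 : ℕ) = r2 - 1 ∧ p.2 = j then (1 : ℝ) else 0)
    (C2 : Matrix (Fin c) (Fin r2 × Fin cm) ℝ)
    (hC2 : C2 = Matrix.of fun a p => K 0 (r2 - (p.1 : ℕ)) a p.2)
    (D : Matrix (Fin c) (Fin cm) ℝ) (hD : D = K 0 0)
    (u : ℕ → ℕ → Fin cm → ℝ)
    (ut : ℤ → ℤ → Fin cm → ℝ)
    (hut : ∀ i j : ℤ, ut i j = if 0 ≤ i ∧ 0 ≤ j then u i.toNat j.toNat else 0)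
    (x1 : ℕ → ℕ → Fin r1 × Fin c → ℝ)
    (x2 : ℕ → ℕ → Fin r2 × Fin cm → ℝ)
    (y : ℕ → ℕ → Fin c → ℝ)
    (hx10 : ∀ j, x1 0 j = 0) (hx20 : ∀ i, x2 i 0 = 0)
    (hx1 : ∀ i j, x1 (i + 1) j = A11 *ᵥ x1 i j + A12 *ᵥ x2 i j + B1 *ᵥ u i j)
    (hx2 : ∀ i j, x2 i (j + 1) = A22 *ᵥ x2 i j + B2 *ᵥ u i j)
    (hy : ∀ i j, y i j = C1 *ᵥ x1 i j + C2 *ᵥ x2 i j + D *ᵥ u i j + b) :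
    ∀ i j : ℕ, y i j = b + ∑ t1 ∈ Finset.range (r1 + 1), ∑ t2 ∈ Finset.range (r2 + 1),
      K t1 t2 *ᵥ ut ((i : ℤ) - (t1 : ℤ)) ((j : ℤ) - (t2 : ℤ)) :=
  conv2d_roesser_realization_general r1 r2 cm c hr1 K b A11 hA11 A12 hA12 B1 hB1 C1 hC1 A22 hA22 B2
    hB2 C2 hC2 D hD u ut hut x1 x2 y hx10 hx20 hx1 hx2 hy
end
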